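/- arXiv:1001.2988 — 12 statements merged into one kernel-verified Lean document; each statement's English description precedes it below -/
import Mathlib

section
/- Let a>0, α∈ℝ, m∈ℤ and λ∈ℂ. Suppose ψ:[-a,a]→ℂ is twice continuously differentiable, not identically zero, satisfies −ψ″(x)+m²ψ(x)=λψ(x) for all x∈[-a,a], and satisfies the separated PT-symmetric boundary conditions with parameters (α,0), i.e. ψ′(a)+iαψ(a)=0 and ψ′(−a)+iαψ(−a)=0. Then λ is a real number. -/
/-!
Write `λ = m² - c²`, so that `ψ'' = c² ψ`; it suffices to show `Re c = 0`. The Wronskians of `ψ`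
with the two exponential solutions `e^{∓cx}` are constant. Comparing them at `±a` through the
boundary conditions gives `ψ(a) e^{ca} = ψ(-a) e^{-ca}` and `ψ(a) e^{-ca} = ψ(-a) e^{ca}` unless
`c = ∓iα`, hence `ψ(-a) (e^{4ca} - 1) = 0`. If `Re c ≠ 0` then `|e^{4ca}| ≠ 1`, so `ψ(-a) = 0`,
then `ψ'(-a) = 0` by the boundary condition, and `ψ` vanishes identically.
-/

open Set Complex

/-- For a solution of `ψ'' = c² ψ` this is the Wronskian of `ψ` with the solution `e^{-cx}`,
hence a first integral of the equation. -/
noncomputable def firstIntegral (ψ ψ' : ℝ → ℂ) (c : ℂ) (x : ℝ) : ℂ :=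
  (ψ' x - c * ψ x) * cexp (c * x)

section FirstIntegral

variable {ψ ψ' ψ'' : ℝ → ℂ} {c : ℂ} {s t x : ℝ}

theorem hasDerivAt_firstIntegral (hψ : HasDerivAt ψ (ψ' x) x) (hψ' : HasDerivAt ψ' (ψ'' x) x) :
    HasDerivAt (firstIntegral ψ ψ' c) ((ψ'' x - c ^ 2 * ψ x) * cexp (c * x)) x := by
  have hexp : HasDerivAt (fun y : ℝ => cexp (c * y)) (cexp (c * x) * c) x := by
    simpa using (((hasDerivAt_id x).ofReal_comp).const_mul c).cexp
  refine ((hψ'.sub (hψ.const_mul c)).mul hexp).congr_deriv ?_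
  change (ψ'' x - c * ψ' x) * _ + (ψ' x - c * ψ x) * _ = _
  ring

theorem firstIntegral_eq_left (hd1 : ∀ x ∈ Icc s t, HasDerivAt ψ (ψ' x) x)
    (hd2 : ∀ x ∈ Icc s t, HasDerivAt ψ' (ψ'' x) x) (hψ : ∀ x ∈ Icc s t, ψ'' x = c ^ 2 * ψ x) :
    ∀ x ∈ Icc s t, firstIntegral ψ ψ' c x = firstIntegral ψ ψ' c s := by
  have hderiv : ∀ x ∈ Icc s t, HasDerivAt (firstIntegral ψ ψ' c) 0 x := fun x hx => by
    simpa [hψ x hx] using hasDerivAt_firstIntegral (c := c) (hd1 x hx) (hd2 x hx)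
  exact constant_of_has_deriv_right_zero
    (fun x hx => (hderiv x hx).continuousAt.continuousWithinAt)
    (fun x hx => (hderiv x (Ico_subset_Icc_self hx)).hasDerivWithinAt)

theorem two_mul_mul_eq_firstIntegral_sub :
    2 * c * ψ x = firstIntegral ψ ψ' (-c) x * cexp (c * x)
      - firstIntegral ψ ψ' c x * cexp (-c * x) := by
  have hinv : cexp (-c * x) * cexp (c * x) = 1 := by rw [← Complex.exp_add]; ring_nf; simp
  simp only [firstIntegral]
  linear_combination (-2 * c * ψ x) * hinv

theorem eq_zero_of_initial_eq_zero (hc : c ≠ 0) (hd1 : ∀ x ∈ Icc s t, HasDerivAt ψ (ψ' x) x)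
    (hd2 : ∀ x ∈ Icc s t, HasDerivAt ψ' (ψ'' x) x) (hψ : ∀ x ∈ Icc s t, ψ'' x = c ^ 2 * ψ x)
    (h0 : ψ s = 0) (h0' : ψ' s = 0) : ∀ x ∈ Icc s t, ψ x = 0 := by
  intro x hx
  have hψneg : ∀ x ∈ Icc s t, ψ'' x = (-c) ^ 2 * ψ x := by simpa using hψ
  have hplus := firstIntegral_eq_left hd1 hd2 hψ x hx
  have hminus := firstIntegral_eq_left hd1 hd2 hψneg x hx
  simp only [firstIntegral, h0, h0', mul_zero, sub_zero, zero_mul] at hplus hminus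
  have h := two_mul_mul_eq_firstIntegral_sub (ψ := ψ) (ψ' := ψ') (c := c) (x := x)
  rw [firstIntegral, firstIntegral, hplus, hminus] at h
  simpa [hc] using h

end FirstIntegral

theorem re_eq_zero_of_pt_boundary {a α : ℝ} {c : ℂ} {ψ ψ' ψ'' : ℝ → ℂ} (ha : 0 < a)
    (hd1 : ∀ x ∈ Icc (-a) a, HasDerivAt ψ (ψ' x) x)
    (hd2 : ∀ x ∈ Icc (-a) a, HasDerivAt ψ' (ψ'' x) x)
    (hψ : ∀ x ∈ Icc (-a) a, ψ'' x = c ^ 2 * ψ x) (hne : ∃ x ∈ Icc (-a) a, ψ x ≠ 0)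
    (hbc1 : ψ' a + I * α * ψ a = 0) (hbc2 : ψ' (-a) + I * α * ψ (-a) = 0) : c.re = 0 := by
  by_contra hre
  have hc : c ≠ 0 := by rintro rfl; exact hre rfl
  have hplus : c + I * α ≠ 0 := fun h => hre (by simpa using congrArg re h)
  have hminus : c - I * α ≠ 0 := fun h => hre (by simpa using congrArg re h)
  have ha_mem : a ∈ Icc (-a) a := right_mem_Icc.mpr (by linarith)
  have hψneg : ∀ x ∈ Icc (-a) a, ψ'' x = (-c) ^ 2 * ψ x := by simpa using hψ
  set E := cexp (c * a)
  have hE : ‖E ^ 4‖ ≠ 1 := by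
    rw [norm_pow, norm_exp, Ne, pow_eq_one_iff_of_nonneg (Real.exp_nonneg _) (by norm_num),
      Real.exp_eq_one_iff]
    simpa [ha.ne'] using hre
  have hfa : (ψ' a - c * ψ a) * E = (ψ' (-a) - c * ψ (-a)) * cexp (-(c * a)) := by
    simpa [firstIntegral, E] using firstIntegral_eq_left hd1 hd2 hψ a ha_mem
  have hfb : (ψ' a + c * ψ a) * cexp (-(c * a)) = (ψ' (-a) + c * ψ (-a)) * E := by
    simpa [firstIntegral, E] using firstIntegral_eq_left hd1 hd2 hψneg a ha_mem
  set E' := cexp (-(c * a))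
  have hinv : E' * E = 1 := by simp [E, E', ← Complex.exp_add]
  have eq1 : ψ a * E = ψ (-a) * E' :=
    mul_left_cancel₀ hplus (by linear_combination -hfa + E * hbc1 - E' * hbc2)
  have eq2 : ψ a * E' = ψ (-a) * E :=
    mul_left_cancel₀ hminus (by linear_combination hfb - E' * hbc1 + E * hbc2)
  have hψa : ψ (-a) = 0 := by
    have hE1 : E ^ 4 - 1 ≠ 0 := sub_ne_zero.mpr fun h => hE (by rw [h, norm_one])
    refine (mul_eq_zero.mp (?_ : ψ (-a) * (E ^ 4 - 1) = 0)).resolve_right hE1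
    linear_combination E * eq1 - E ^ 3 * eq2 + (ψ (-a) + ψ a * E ^ 2) * hinv
  obtain ⟨x, hx, hψx⟩ := hne
  exact hψx <| eq_zero_of_initial_eq_zero hc hd1 hd2 hψ hψa
    (by linear_combination hbc2 - I * α * hψa) x hx

theorem pt_zero_curvature_alpha_real_general
    (a α : ℝ) (ha : 0 < a) (m : ℤ) (lam : ℂ)
    (ψ ψ' ψ'' : ℝ → ℂ)
    (hd1 : ∀ x ∈ Set.Icc (-a) a, HasDerivAt ψ (ψ' x) x)
    (hd2 : ∀ x ∈ Set.Icc (-a) a, HasDerivAt ψ' (ψ'' x) x)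
    (hne : ∃ x ∈ Set.Icc (-a) a, ψ x ≠ 0)
    (hode : ∀ x ∈ Set.Icc (-a) a, -ψ'' x + (m : ℂ) ^ 2 * ψ x = lam * ψ x)
    (hbc1 : ψ' a + Complex.I * (α : ℂ) * ψ a = 0)
    (hbc2 : ψ' (-a) + Complex.I * (α : ℂ) * ψ (-a) = 0) :
    ∃ r : ℝ, lam = (r : ℂ) := by
  obtain ⟨c, hc⟩ : ∃ c : ℂ, c ^ 2 = (m : ℂ) ^ 2 - lam := IsAlgClosed.exists_pow_nat_eq _ two_pos
  have hψ : ∀ x ∈ Icc (-a) a, ψ'' x = c ^ 2 * ψ x := fun x hx => by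
    linear_combination -hode x hx - ψ x * hc
  have hre : c.re = 0 := re_eq_zero_of_pt_boundary ha hd1 hd2 hψ hne hbc1 hbc2
  have hc_im : c = c.im * I := by apply Complex.ext <;> simp [hre]
  refine ⟨m ^ 2 + c.im ^ 2, ?_⟩
  rw [hc_im] at hc
  push_cast
  linear_combination hc - c.im ^ 2 * I_sq

/-- For the zero-curvature transverse problem with separated
PT-symmetric boundary conditions with parameters `(α, 0)`, every eigenvalue is real. -/
theorem pt_zero_curvature_alpha_real
    (a α : ℝ) (ha : 0 < a) (m : ℤ) (lam : ℂ)
    (ψ ψ' ψ'' : ℝ → ℂ)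
    (hd1 : ∀ x ∈ Set.Icc (-a) a, HasDerivAt ψ (ψ' x) x)
    (hd2 : ∀ x ∈ Set.Icc (-a) a, HasDerivAt ψ' (ψ'' x) x)
    (hcont : ContinuousOn ψ'' (Set.Icc (-a) a))
    (hne : ∃ x ∈ Set.Icc (-a) a, ψ x ≠ 0)
    (hode : ∀ x ∈ Set.Icc (-a) a, -ψ'' x + (m : ℂ) ^ 2 * ψ x = lam * ψ x)
    (hbc1 : ψ' a + Complex.I * (α : ℂ) * ψ a = 0)
    (hbc2 : ψ' (-a) + Complex.I * (α : ℂ) * ψ (-a) = 0) :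
    ∃ r : ℝ, lam = (r : ℂ) :=
  pt_zero_curvature_alpha_real_general a α ha m lam ψ ψ' ψ'' hd1 hd2 hne hode hbc1 hbc2
end

section
/- Let a>0, α∈ℝ, m∈ℤ and λ∈ℂ. There exists a twice continuously differentiable function ψ:[-a,a]→ℂ, not identically zero, with −ψ″(x)+m²ψ(x)=λψ(x) for all x∈[-a,a] and ψ′(a)+iαψ(a)=0, ψ′(−a)+iαψ(−a)=0, if and only if λ=α²+m² or λ=(jπ/(2a))²+m² for some positive integer j. Moreover, for λ=α²+m² the function ψ(x)=exp(−iαx) is such a solution. -/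
/-!
Put `μ² = λ - m²`. The equation `ψ'' = -μ² ψ` factors as `(∂ - iμ)(∂ + iμ) ψ = 0`, so
`ψ' ± iμ ψ` are multiples of `e^{± iμ x}`. Inserting this into the two boundary conditions gives
`(μ² - α²) sin (2μa) ψ(-a) = 0`, and `a α² ψ(-a) = 0` when `μ = 0`; here `ψ(-a) ≠ 0`, since the
boundary condition at `-a` would otherwise force zero Cauchy data. Hence `μ² = α²` or
`2μa ∈ πℤ \ {0}`. Conversely `e^{-iαx}` and `cos μ(x - a) - (iα/μ) sin μ(x - a)` with
`μ = jπ/(2a)` are eigenfunctions.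
-/

open Complex Set

/-- A nontrivial twice continuously differentiable solution of the transverse
eigenvalue problem `-ψ'' + m² ψ = λ ψ` on `[-a, a]` with separated PT-symmetric
boundary conditions with parameters `(α, 0)`. -/
def IsTransverseSol (a α : ℝ) (m : ℤ) (lam : ℂ) (ψ : ℝ → ℂ) : Prop :=
  ∃ ψ' ψ'' : ℝ → ℂ,
    (∀ x ∈ Set.Icc (-a) a, HasDerivAt ψ (ψ' x) x) ∧
    (∀ x ∈ Set.Icc (-a) a, HasDerivAt ψ' (ψ'' x) x) ∧
    ContinuousOn ψ'' (Set.Icc (-a) a) ∧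
    (∃ x ∈ Set.Icc (-a) a, ψ x ≠ 0) ∧
    (∀ x ∈ Set.Icc (-a) a, -ψ'' x + (m : ℂ) ^ 2 * ψ x = lam * ψ x) ∧
    ψ' a + Complex.I * (α : ℂ) * ψ a = 0 ∧
    ψ' (-a) + Complex.I * (α : ℂ) * ψ (-a) = 0

theorem eq_left_of_hasDerivAt_zero {E : Type*} [NormedAddCommGroup E] [NormedSpace ℝ E]
    {f : ℝ → E} {s t : ℝ} (hf : ∀ x ∈ Icc s t, HasDerivAt f 0 x) :
    ∀ x ∈ Icc s t, f x = f s :=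
  constant_of_has_deriv_right_zero (fun x hx => (hf x hx).continuousAt.continuousWithinAt)
    fun x hx => (hf x (Ico_subset_Icc_self hx)).hasDerivWithinAt

theorem hasDerivAt_mul_ofReal_sub (c : ℂ) (s x : ℝ) :
    HasDerivAt (fun y : ℝ => c * ((y : ℂ) - s)) c x := by
  simpa using ((hasDerivAt_id x).ofReal_comp.sub_const (s : ℂ)).const_mul c

theorem eq_exp_mul_of_hasDerivAt_mul {v : ℝ → ℂ} {c : ℂ} {s t : ℝ}
    (hv : ∀ x ∈ Icc s t, HasDerivAt v (c * v x) x) :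
    ∀ x ∈ Icc s t, v x = exp (c * (x - s)) * v s := by
  have hconst := eq_left_of_hasDerivAt_zero (f := fun y : ℝ => exp (-c * (y - s)) * v y)
    fun x hx => by
      refine ((hasDerivAt_mul_ofReal_sub (-c) s x).cexp.mul (hv x hx)).congr_deriv ?_
      ring
  intro x hx
  calc v x = exp (c * (x - s)) * (exp (-c * (x - s)) * v x) := by
        rw [← mul_assoc, ← exp_add]; simp
    _ = exp (c * (x - s)) * v s := by rw [hconst x hx]; simp

section SecondOrder

variable {ψ ψ' ψ'' : ℝ → ℂ} {μ : ℂ} {s t : ℝ}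

/-- The factorisation `∂² + μ² = (∂ - iμ)(∂ + iμ)`. -/
theorem deriv_add_I_mul_eq_exp
    (hψ : ∀ x ∈ Icc s t, HasDerivAt ψ (ψ' x) x) (hψ' : ∀ x ∈ Icc s t, HasDerivAt ψ' (ψ'' x) x)
    (hψ'' : ∀ x ∈ Icc s t, ψ'' x = -μ ^ 2 * ψ x) :
    ∀ x ∈ Icc s t, ψ' x + I * μ * ψ x = exp (I * μ * (x - s)) * (ψ' s + I * μ * ψ s) :=
  eq_exp_mul_of_hasDerivAt_mul fun x hx => by
    refine ((hψ' x hx).add ((hψ x hx).const_mul (I * μ))).congr_deriv ?_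
    rw [hψ'' x hx]
    linear_combination (-(μ ^ 2 * ψ x)) * I_sq

theorem eq_zero_of_eq_zero_of_deriv_eq_zero
    (hψ : ∀ x ∈ Icc s t, HasDerivAt ψ (ψ' x) x) (hψ' : ∀ x ∈ Icc s t, HasDerivAt ψ' (ψ'' x) x)
    (hψ'' : ∀ x ∈ Icc s t, ψ'' x = -μ ^ 2 * ψ x) (h₀ : ψ s = 0) (h₁ : ψ' s = 0) :
    ∀ x ∈ Icc s t, ψ x = 0 := by
  have hwave (ν : ℂ) (hν : ν ^ 2 = μ ^ 2) (x : ℝ) (hx : x ∈ Icc s t) : ψ' x + I * ν * ψ x = 0 := by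
    rw [deriv_add_I_mul_eq_exp hψ hψ' (fun y hy => hν ▸ hψ'' y hy) x hx, h₀, h₁]
    simp
  rcases eq_or_ne μ 0 with rfl | hμ
  · have hψ0 := eq_left_of_hasDerivAt_zero fun x hx =>
      (hψ x hx).congr_deriv (by simpa using hwave 0 rfl x hx)
    exact fun x hx => (hψ0 x hx).trans h₀
  · intro x hx
    have h := congrArg₂ (· - ·) (hwave μ rfl x hx) (hwave (-μ) (by ring) x hx)
    have : 2 * I * μ * ψ x = 0 := by linear_combination h
    simpa [hμ, I_ne_zero] using this

end SecondOrder

section Boundary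

variable {a α : ℝ} {ψ ψ' ψ'' : ℝ → ℂ}

theorem sq_sub_sq_mul_sin_mul_eq_zero {μ : ℂ} (ha : 0 ≤ a)
    (hψ : ∀ x ∈ Icc (-a) a, HasDerivAt ψ (ψ' x) x)
    (hψ' : ∀ x ∈ Icc (-a) a, HasDerivAt ψ' (ψ'' x) x)
    (hψ'' : ∀ x ∈ Icc (-a) a, ψ'' x = -μ ^ 2 * ψ x)
    (hbcR : ψ' a + I * α * ψ a = 0) (hbcL : ψ' (-a) + I * α * ψ (-a) = 0) :
    (μ ^ 2 - α ^ 2) * sin (2 * μ * a) * ψ (-a) = 0 := by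
  have hmem : a ∈ Icc (-a) a := ⟨by linarith, le_rfl⟩
  have hplus := deriv_add_I_mul_eq_exp hψ hψ' hψ'' a hmem
  have hminus := deriv_add_I_mul_eq_exp (μ := -μ) hψ hψ' (by simpa using hψ'') a hmem
  rw [show I * μ * ((a : ℂ) - ((-a : ℝ) : ℂ)) = 2 * μ * a * I by push_cast; ring] at hplus
  rw [show I * -μ * ((a : ℂ) - ((-a : ℝ) : ℂ)) = -(2 * μ * a) * I by push_cast; ring] at hminus
  set E := exp (2 * μ * a * I)
  set F := exp (-(2 * μ * a) * I)
  -- `(μ + α) * hplus + (μ - α) * hminus` eliminates `ψ a` and `ψ' a` via `hbcR`,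
  -- leaving `i (μ² - α²) (F - E) ψ(-a) = 0` after `hbcL`.
  linear_combination (1 / 2 * (μ ^ 2 - α ^ 2) * ψ (-a)) * two_sin (2 * μ * a)
    + (1 / 2) * ((μ + α) * hplus + (μ - α) * hminus - 2 * μ * hbcR
      + ((μ + α) * E + (μ - α) * F) * hbcL)

theorem mul_sq_mul_eq_zero_of_deriv2_eq_zero (ha : 0 ≤ a)
    (hψ : ∀ x ∈ Icc (-a) a, HasDerivAt ψ (ψ' x) x)
    (hψ' : ∀ x ∈ Icc (-a) a, HasDerivAt ψ' (ψ'' x) x)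
    (hψ'' : ∀ x ∈ Icc (-a) a, ψ'' x = 0)
    (hbcR : ψ' a + I * α * ψ a = 0) (hbcL : ψ' (-a) + I * α * ψ (-a) = 0) :
    (a : ℂ) * α ^ 2 * ψ (-a) = 0 := by
  have hmem : a ∈ Icc (-a) a := ⟨by linarith, le_rfl⟩
  have hslope := eq_left_of_hasDerivAt_zero fun x hx => hψ'' x hx ▸ hψ' x hx
  have hline := eq_left_of_hasDerivAt_zero (f := fun y => ψ y - ψ' (-a) * ((y : ℂ) - (-a : ℝ)))
    fun x hx => ((hψ x hx).sub (hasDerivAt_mul_ofReal_sub _ _ x)).congr_deriv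
      (sub_eq_zero.2 (hslope x hx))
  have hψa := hline a hmem
  push_cast at hψa
  linear_combination -(1 / 2 * I * α) * hψa + (1 / 2) * (hbcR - hbcL) - (1 / 2) * hslope a hmem
    - a * I * α * hbcL + a * α ^ 2 * ψ (-a) * I_sq

end Boundary

theorem sin_two_mul_mul_eq_zero_iff {a : ℝ} (ha : a ≠ 0) {μ : ℂ} (hμ : μ ≠ 0) :
    sin (2 * μ * a) = 0 ↔ ∃ j : ℕ, 0 < j ∧ μ ^ 2 = (((j : ℝ) * Real.pi / (2 * a) : ℝ) : ℂ) ^ 2 := by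
  have ha' : (a : ℂ) ≠ 0 := ofReal_ne_zero.2 ha
  rw [sin_eq_zero_iff]
  constructor
  · rintro ⟨k, hk⟩
    have hk0 : k ≠ 0 := by
      rintro rfl
      simp [hμ, ha'] at hk
    refine ⟨k.natAbs, Int.natAbs_pos.2 hk0, ?_⟩
    have hj : ((k.natAbs : ℤ) : ℂ) ^ 2 = (k : ℂ) ^ 2 := by
      rw [← Int.cast_pow, Int.natAbs_sq, Int.cast_pow]
    rw [Int.cast_natCast] at hj
    push_cast
    field_simp
    linear_combination (2 * μ * a + k * Real.pi) * hk - Real.pi ^ 2 * hj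
  · rintro ⟨j, -, hj⟩
    rcases sq_eq_sq_iff_eq_or_eq_neg.1 hj with rfl | rfl
    · exact ⟨j, by push_cast; field_simp⟩
    · exact ⟨-j, by push_cast; field_simp⟩

theorem eq_or_exists_of_isTransverseSol {a α : ℝ} {m : ℤ} {lam : ℂ} {ψ : ℝ → ℂ} (ha : 0 < a)
    (h : IsTransverseSol a α m lam ψ) :
    lam = (α : ℂ) ^ 2 + (m : ℂ) ^ 2 ∨
      ∃ j : ℕ, 0 < j ∧ lam = (((j : ℝ) * Real.pi / (2 * a) : ℝ) : ℂ) ^ 2 + (m : ℂ) ^ 2 := by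
  obtain ⟨ψ', ψ'', hψ, hψ', -, ⟨x₀, hx₀, hψx₀⟩, hode, hbcR, hbcL⟩ := h
  obtain ⟨μ, hμ⟩ := IsAlgClosed.exists_pow_nat_eq (lam - (m : ℂ) ^ 2) two_pos
  have hψ'' : ∀ x ∈ Icc (-a) a, ψ'' x = -μ ^ 2 * ψ x := fun x hx => by
    linear_combination -hode x hx + ψ x * hμ
  have hψa : ψ (-a) ≠ 0 := fun h₀ => hψx₀ <|
    eq_zero_of_eq_zero_of_deriv_eq_zero hψ hψ' hψ'' h₀ (by simpa [h₀] using hbcL) x₀ hx₀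
  rcases eq_or_ne μ 0 with rfl | hμ0
  · have h := mul_sq_mul_eq_zero_of_deriv2_eq_zero ha.le hψ hψ' (by simpa using hψ'') hbcR hbcL
    obtain rfl : α = 0 := by simpa [ha.ne', hψa] using h
    left
    push_cast
    linear_combination -hμ
  · have h := sq_sub_sq_mul_sin_mul_eq_zero ha.le hψ hψ' hψ'' hbcR hbcL
    rcases mul_eq_zero.1 ((mul_eq_zero.1 h).resolve_right hψa) with h | h
    · left
      linear_combination h - hμ
    · obtain ⟨j, hj, hμj⟩ := (sin_two_mul_mul_eq_zero_iff ha.ne' hμ0).1 h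
      exact Or.inr ⟨j, hj, by linear_combination hμj - hμ⟩

theorem isTransverseSol_exp_neg_I_mul (a α : ℝ) (m : ℤ) (ha : 0 ≤ a) :
    IsTransverseSol a α m ((α : ℂ) ^ 2 + (m : ℂ) ^ 2) fun x : ℝ => exp (-(I * α * x)) := by
  have hphase (x : ℝ) : HasDerivAt (fun y : ℝ => -(I * α * y)) (-(I * α)) x := by
    simpa using (hasDerivAt_id x).ofReal_comp.const_mul (-(I * α))
  refine ⟨fun x => -(I * α) * exp (-(I * α * x)), fun x => -(α : ℂ) ^ 2 * exp (-(I * α * x)),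
    fun x _ => (hphase x).cexp.congr_deriv (mul_comm _ _),
    fun x _ => ((hphase x).cexp.const_mul _).congr_deriv ?_, by fun_prop,
    ⟨a, ⟨by linarith, le_rfl⟩, exp_ne_zero _⟩, fun x _ => by ring, by ring, by ring⟩
  linear_combination (α ^ 2 * exp (-(I * α * x))) * I_sq

theorem isTransverseSol_cos_sub_sin (a α : ℝ) (m : ℤ) {μ : ℂ} (ha : 0 ≤ a) (hμ : μ ≠ 0)
    (hsin : sin (2 * μ * a) = 0) :
    IsTransverseSol a α m (μ ^ 2 + (m : ℂ) ^ 2)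
      fun x : ℝ => cos (μ * (x - a)) - I * α / μ * sin (μ * (x - a)) := by
  have hcos (x : ℝ) := (hasDerivAt_cos _).comp x (hasDerivAt_mul_ofReal_sub μ a x)
  have hsin' (x : ℝ) := (hasDerivAt_sin _).comp x (hasDerivAt_mul_ofReal_sub μ a x)
  have hreflect : μ * (((-a : ℝ) : ℂ) - a) = -(2 * μ * a) := by push_cast; ring
  refine ⟨fun x => -μ * sin (μ * (x - a)) - I * α * cos (μ * (x - a)),
    fun x => -μ ^ 2 * (cos (μ * (x - a)) - I * α / μ * sin (μ * (x - a))),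
    fun x _ => ((hcos x).sub ((hsin' x).const_mul _)).congr_deriv ?_,
    fun x _ => (((hsin' x).const_mul _).sub ((hcos x).const_mul _)).congr_deriv ?_,
    by fun_prop, ⟨a, ⟨by linarith, le_rfl⟩, by simp⟩, fun x _ => by ring, by simp, ?_⟩
  · field_simp
  · field_simp
    ring
  · simp only [hreflect, sin_neg, cos_neg, hsin]
    ring

/-- the explicit spectrum of the zero-curvature Hamiltonian
`H_{I(0)}^m(α, 0)`: the eigenvalues are `α² + m²` and `(jπ/(2a))² + m²` for
positive integers `j`; moreover `exp(-iαx)` is an eigenfunction for `α² + m²`. -/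
theorem pt_zero_curvature_spectrum
    (a α : ℝ) (ha : 0 < a) (m : ℤ) (lam : ℂ) :
    ((∃ ψ : ℝ → ℂ, IsTransverseSol a α m lam ψ) ↔
      (lam = (α : ℂ) ^ 2 + (m : ℂ) ^ 2 ∨
        ∃ j : ℕ, 0 < j ∧
          lam = (((j : ℝ) * Real.pi / (2 * a) : ℝ) : ℂ) ^ 2 + (m : ℂ) ^ 2)) ∧
    (lam = (α : ℂ) ^ 2 + (m : ℂ) ^ 2 →
      IsTransverseSol a α m lam
        (fun x : ℝ => Complex.exp (-(Complex.I * (α : ℂ) * (x : ℂ))))) := by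
  have hexp := isTransverseSol_exp_neg_I_mul a α m ha.le
  refine ⟨⟨fun ⟨ψ, hψ⟩ => eq_or_exists_of_isTransverseSol ha hψ, ?_⟩, fun h => h ▸ hexp⟩
  rintro (rfl | ⟨j, hj, rfl⟩)
  · exact ⟨_, hexp⟩
  · have hμ : (((j : ℝ) * Real.pi / (2 * a) : ℝ) : ℂ) ≠ 0 := by
      have : (0 : ℝ) < j := Nat.cast_pos.2 hj
      exact ofReal_ne_zero.2 (by positivity)
    exact ⟨_, isTransverseSol_cos_sub_sin a α m ha.le hμ
      ((sin_two_mul_mul_eq_zero_iff ha.ne' hμ).2 ⟨j, hj, rfl⟩)⟩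
end

section
/- Let a>0, α,β∈ℝ, λ∈ℂ, and let φ:[-a,a]→ℂ be twice continuously differentiable with −φ″(x)+2iαφ′(x)+α²φ(x)=λφ(x) for all x∈[-a,a], φ′(a)+βφ(a)=0 and φ′(−a)−βφ(−a)=0. Then Im(λ)·( ∫_{−a}^{a}|φ′(x)|² dx + β(|φ(a)|²+|φ(−a)|²) + β² ∫_{−a}^{a}|φ(x)|² dx ) = 0. -/
open intervalIntegral MeasureTheory

private lemma my_intervalIntegral_conj (f : ℝ → ℂ) (a b : ℝ) :
    ∫ x in a..b, (starRingEnd ℂ) (f x) = (starRingEnd ℂ) (∫ x in a..b, f x) := by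
  simp only [intervalIntegral, integral_conj, map_sub]

private lemma my_mul_conj_self (z : ℂ) : z * (starRingEnd ℂ) z = ((‖z‖ ^ 2 : ℝ) : ℂ) := by
  rw [Complex.mul_conj]
  norm_cast
  rw [Complex.normSq_eq_norm_sq]

/-- the key identity
`Im λ · ( ∫|φ'|² + β(|φ(a)|² + |φ(-a)|²) + β² ∫|φ|² ) = 0`
for solutions of the gauged problem with Robin boundary conditions. -/
theorem pt_reality_key_identity
    (a α β : ℝ) (ha : 0 < a) (lam : ℂ)
    (φ φ' φ'' : ℝ → ℂ)
    (hd1 : ∀ x ∈ Set.Icc (-a) a, HasDerivAt φ (φ' x) x)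
    (hd2 : ∀ x ∈ Set.Icc (-a) a, HasDerivAt φ' (φ'' x) x)
    (hcont : ContinuousOn φ'' (Set.Icc (-a) a))
    (hode : ∀ x ∈ Set.Icc (-a) a,
      -φ'' x + 2 * Complex.I * (α : ℂ) * φ' x + (α : ℂ) ^ 2 * φ x = lam * φ x)
    (hbc1 : φ' a + (β : ℂ) * φ a = 0)
    (hbc2 : φ' (-a) - (β : ℂ) * φ (-a) = 0) :
    lam.im * ((∫ x in (-a)..a, ‖φ' x‖ ^ 2)
      + β * (‖φ a‖ ^ 2 + ‖φ (-a)‖ ^ 2)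
      + β ^ 2 * ∫ x in (-a)..a, ‖φ x‖ ^ 2) = 0 := by
  have hab : (-a) ≤ a := by linarith
  have hu : Set.uIcc (-a) a = Set.Icc (-a) a := Set.uIcc_of_le hab
  set c := starRingEnd ℂ with hc
  -- continuity facts
  have hcφ : ContinuousOn φ (Set.Icc (-a) a) :=
    fun x hx => (hd1 x hx).continuousAt.continuousWithinAt
  have hcφ' : ContinuousOn φ' (Set.Icc (-a) a) :=
    fun x hx => (hd2 x hx).continuousAt.continuousWithinAt
  have hcs : ContinuousOn (fun x => c (φ x)) (Set.Icc (-a) a) := hcφ.star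
  have hcs' : ContinuousOn (fun x => c (φ' x)) (Set.Icc (-a) a) := hcφ'.star
  -- integrability of basic products
  have hint1 : IntervalIntegrable (fun x => φ' x * c (φ x)) volume (-a) a :=
    (hcφ'.mul hcs).intervalIntegrable_of_Icc hab
  have hint0 : IntervalIntegrable (fun x => φ x * c (φ x)) volume (-a) a :=
    (hcφ.mul hcs).intervalIntegrable_of_Icc hab
  have hint2 : IntervalIntegrable (fun x => φ' x * c (φ' x)) volume (-a) a :=
    (hcφ'.mul hcs').intervalIntegrable_of_Icc hab
  have hint3 : IntervalIntegrable (fun x => φ x * c (φ' x)) volume (-a) a :=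
    (hcφ.mul hcs').intervalIntegrable_of_Icc hab
  -- the key complex quantities
  set K : ℂ := ∫ x in (-a)..a, φ' x * c (φ x) with hK
  set I0 : ℝ := ∫ x in (-a)..a, ‖φ x‖ ^ 2 with hI0
  set I1 : ℝ := ∫ x in (-a)..a, ‖φ' x‖ ^ 2 with hI1
  -- complex versions of the real integrals
  have hI0c : (∫ x in (-a)..a, φ x * c (φ x)) = (I0 : ℂ) := by
    rw [hI0, ← intervalIntegral.integral_ofReal]
    exact intervalIntegral.integral_congr fun x _ => my_mul_conj_self (φ x)
  have hI1c : (∫ x in (-a)..a, φ' x * c (φ' x)) = (I1 : ℂ) := by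
    rw [hI1, ← intervalIntegral.integral_ofReal]
    exact intervalIntegral.integral_congr fun x _ => my_mul_conj_self (φ' x)
  have hKc : (∫ x in (-a)..a, φ x * c (φ' x)) = c K := by
    rw [hK, ← my_intervalIntegral_conj]
    refine intervalIntegral.integral_congr fun x _ => ?_
    rw [hc, map_mul, Complex.conj_conj, mul_comm]
  -- rewrite of the ODE
  have hODE : ∀ x ∈ Set.Icc (-a) a,
      φ'' x = 2 * Complex.I * (α : ℂ) * φ' x + ((α : ℂ) ^ 2 - lam) * φ x := by
    intro x hx
    linear_combination - (hode x hx)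
  -- boundary conditions rewritten
  have hb1 : φ' a = -(β : ℂ) * φ a := by linear_combination hbc1
  have hb2 : φ' (-a) = (β : ℂ) * φ (-a) := by linear_combination hbc2
  -- derivative of conj φ
  have hds : ∀ x ∈ Set.Icc (-a) a, HasDerivAt (fun y => c (φ y)) (c (φ' x)) x := by
    intro x hx
    exact (hd1 x hx).star
  have hds' : ∀ x ∈ Set.Icc (-a) a, HasDerivAt (fun y => c (φ' y)) (c (φ'' x)) x := by
    intro x hx
    exact (hd2 x hx).star
  -- FTC for |φ|²  :  Bp - Bm = K + conj K
  have eqH : ((‖φ a‖ ^ 2 : ℝ) : ℂ) - ((‖φ (-a)‖ ^ 2 : ℝ) : ℂ) = K + c K := by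
    have hder : ∀ x ∈ Set.uIcc (-a) a,
        HasDerivAt (fun y => φ y * c (φ y)) (φ' x * c (φ x) + φ x * c (φ' x)) x := by
      intro x hx
      rw [hu] at hx
      exact (hd1 x hx).mul (hds x hx)
    have h := intervalIntegral.integral_eq_sub_of_hasDerivAt hder (hint1.add hint3)
    rw [intervalIntegral.integral_add hint1 hint3, hKc, ← hK,
      my_mul_conj_self, my_mul_conj_self] at h
    linear_combination -h
  -- FTC for φ' conj φ
  have eqF : -(β : ℂ) * (((‖φ a‖ ^ 2 : ℝ) : ℂ) + ((‖φ (-a)‖ ^ 2 : ℝ) : ℂ))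
      = 2 * Complex.I * (α : ℂ) * K + (((α : ℂ) ^ 2 - lam) * (I0 : ℂ) + (I1 : ℂ)) := by
    have hder : ∀ x ∈ Set.uIcc (-a) a,
        HasDerivAt (fun y => φ' y * c (φ y))
          (2 * Complex.I * (α : ℂ) * (φ' x * c (φ x))
            + (((α : ℂ) ^ 2 - lam) * (φ x * c (φ x)) + φ' x * c (φ' x))) x := by
      intro x hx
      rw [hu] at hx
      have h := (hd2 x hx).mul (hds x hx)
      have he : φ'' x * c (φ x) + φ' x * c (φ' x)
          = 2 * Complex.I * (α : ℂ) * (φ' x * c (φ x))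
            + (((α : ℂ) ^ 2 - lam) * (φ x * c (φ x)) + φ' x * c (φ' x)) := by
        rw [hODE x hx]; ring
      exact he ▸ h
    have hint : IntervalIntegrable (fun x => 2 * Complex.I * (α : ℂ) * (φ' x * c (φ x))
        + (((α : ℂ) ^ 2 - lam) * (φ x * c (φ x)) + φ' x * c (φ' x))) volume (-a) a :=
      (hint1.const_mul _).add ((hint0.const_mul _).add hint2)
    have h := intervalIntegral.integral_eq_sub_of_hasDerivAt hder hint
    rw [intervalIntegral.integral_add (hint1.const_mul _) ((hint0.const_mul _).add hint2),
      intervalIntegral.integral_add (hint0.const_mul _) hint2,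
      intervalIntegral.integral_const_mul, intervalIntegral.integral_const_mul,
      hI0c, hI1c, ← hK, hb1, hb2] at h
    have hba : (-(β : ℂ) * φ a) * c (φ a) = -(β : ℂ) * ((‖φ a‖ ^ 2 : ℝ) : ℂ) := by
      rw [mul_assoc, my_mul_conj_self]
    have hbb : ((β : ℂ) * φ (-a)) * c (φ (-a)) = (β : ℂ) * ((‖φ (-a)‖ ^ 2 : ℝ) : ℂ) := by
      rw [mul_assoc, my_mul_conj_self]
    rw [hba, hbb] at h
    linear_combination - h
  -- FTC for |φ'|²
  have eqG : (β : ℂ) ^ 2 * (((‖φ a‖ ^ 2 : ℝ) : ℂ) - ((‖φ (-a)‖ ^ 2 : ℝ) : ℂ))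
      = ((α : ℂ) ^ 2 - lam) * c K + ((α : ℂ) ^ 2 - c lam) * K := by
    have hder : ∀ x ∈ Set.uIcc (-a) a,
        HasDerivAt (fun y => φ' y * c (φ' y))
          (((α : ℂ) ^ 2 - lam) * (φ x * c (φ' x))
            + ((α : ℂ) ^ 2 - c lam) * (φ' x * c (φ x))) x := by
      intro x hx
      rw [hu] at hx
      have h := (hd2 x hx).mul (hds' x hx)
      have he : φ'' x * c (φ' x) + φ' x * c (φ'' x)
          = ((α : ℂ) ^ 2 - lam) * (φ x * c (φ' x))
            + ((α : ℂ) ^ 2 - c lam) * (φ' x * c (φ x)) := by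
        rw [hODE x hx]
        simp only [hc, map_add, map_mul, map_sub, map_pow, Complex.conj_ofReal,
          Complex.conj_I, map_ofNat]
        ring
      exact he ▸ h
    have hint : IntervalIntegrable (fun x => ((α : ℂ) ^ 2 - lam) * (φ x * c (φ' x))
        + ((α : ℂ) ^ 2 - c lam) * (φ' x * c (φ x))) volume (-a) a :=
      (hint3.const_mul _).add (hint1.const_mul _)
    have h := intervalIntegral.integral_eq_sub_of_hasDerivAt hder hint
    rw [intervalIntegral.integral_add (hint3.const_mul _) (hint1.const_mul _),
      intervalIntegral.integral_const_mul, intervalIntegral.integral_const_mul,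
      hKc, ← hK, hb1, hb2] at h
    have hba : (-(β : ℂ) * φ a) * c (-(β : ℂ) * φ a) = (β : ℂ) ^ 2 * ((‖φ a‖ ^ 2 : ℝ) : ℂ) := by
      simp only [hc, map_mul, map_neg, Complex.conj_ofReal]
      have := my_mul_conj_self (φ a)
      linear_combination ((β : ℂ))^2 * this
    have hbb : ((β : ℂ) * φ (-a)) * c ((β : ℂ) * φ (-a))
        = (β : ℂ) ^ 2 * ((‖φ (-a)‖ ^ 2 : ℝ) : ℂ) := by
      simp only [hc, map_mul, Complex.conj_ofReal]
      have := my_mul_conj_self (φ (-a))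
      linear_combination ((β : ℂ))^2 * this
    rw [hba, hbb] at h
    linear_combination - h
  -- conjugate of eqF
  have eqF' := congrArg c eqF
  simp only [hc, map_mul, map_add, map_neg, map_sub, map_pow, Complex.conj_ofReal,
    Complex.conj_I, map_ofNat, Complex.conj_conj] at eqF'
  -- the key algebraic identity over ℂ
  have key : (lam - c lam) * ((I1 : ℂ) + (β : ℂ) * (((‖φ a‖ ^ 2 : ℝ) : ℂ) + ((‖φ (-a)‖ ^ 2 : ℝ) : ℂ))
      + (β : ℂ) ^ 2 * (I0 : ℂ)) = 0 := by
    linear_combination (-(lam - c lam) - ((α : ℂ) ^ 2 - lam - (β : ℂ) ^ 2)) * eqF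
      + (((α : ℂ) ^ 2 - lam - (β : ℂ) ^ 2)) * eqF'
      + (2 * Complex.I * (α : ℂ)) * eqG
      + (-(2 * Complex.I * (α : ℂ)) * (β : ℂ) ^ 2) * eqH
  -- conclude
  rw [hc, Complex.sub_conj] at key
  have key2 : ((lam.im * (I1 + β * (‖φ a‖ ^ 2 + ‖φ (-a)‖ ^ 2) + β ^ 2 * I0) : ℝ) : ℂ)
      * (2 * Complex.I) = 0 := by
    rw [← key]
    push_cast
    ring
  have h2i : (2 * Complex.I : ℂ) ≠ 0 := by
    simp [Complex.I_ne_zero]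
  have := (mul_eq_zero.mp key2).resolve_right h2i
  exact_mod_cast this
end

section
/- Let a>0, α,β∈ℝ, λ∈ℂ, and let φ:[-a,a]→ℂ be twice continuously differentiable with −φ″(x)+2iαφ′(x)+α²φ(x)=λφ(x) for all x∈[-a,a], φ′(a)+βφ(a)=0 and φ′(−a)−βφ(−a)=0. Then α·(|φ(a)|²−|φ(−a)|²) = Im(λ)·∫_{−a}^{a}|φ(x)|² dx. -/
/-!
Multiply the equation by `conj φ` and take imaginary parts: with the current
`J = Im (conj φ · φ')`, one finds `(α |φ|² - J)' = Im λ · |φ|²`. Integrating over `[-a, a]` gives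
the identity, because the Robin conditions make `φ'` a real multiple of `φ` at both endpoints,
so that `J` vanishes there.
-/

open Complex ComplexConjugate

lemma im_conj_mul_eq_zero_of_eq_ofReal_mul {z w : ℂ} {r : ℝ} (h : w = r * z) :
    (conj z * w).im = 0 := by
  rw [h, mul_left_comm, conj_mul', ← ofReal_pow, ← ofReal_mul, ofReal_im]

lemma HasDerivAt.im_conj_mul {φ φ' : ℝ → ℂ} {φ'' : ℂ} {x : ℝ}
    (h1 : HasDerivAt φ (φ' x) x) (h2 : HasDerivAt φ' φ'' x) :
    HasDerivAt (fun y => (conj (φ y) * φ' y).im) (conj (φ x) * φ'').im x := by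
  have hprod : HasDerivAt (fun y => conj (φ y) * φ' y)
      (conj (φ' x) * φ' x + conj (φ x) * φ'') x :=
    h1.star.mul h2
  have him : HasDerivAt (fun y => (conj (φ y) * φ' y).im)
      (conj (φ' x) * φ' x + conj (φ x) * φ'').im x :=
    imCLM.hasFDerivAt.comp_hasDerivAt x hprod
  rwa [add_im, conj_mul', ← ofReal_pow, ofReal_im, zero_add] at him

lemma im_conj_mul_of_gauged_eq {α : ℝ} {lam z z' z'' : ℂ}
    (h : -z'' + 2 * I * α * z' + α ^ 2 * z = lam * z) :
    (conj z * z'').im = 2 * α * (z' * conj z).re - lam.im * ‖z‖ ^ 2 := by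
  have hz'' : z'' = 2 * I * α * z' + α ^ 2 * z - lam * z := by linear_combination -h
  rw [hz'', ← normSq_eq_norm_sq, normSq_apply]
  simp only [mul_im, mul_re, sub_im, add_im, add_re, sub_re, conj_re, conj_im, I_re, I_im,
    ofReal_re, ofReal_im, re_ofNat, im_ofNat, ← ofReal_pow]
  ring

lemma hasDerivAt_gauged_flux {α : ℝ} {lam : ℂ} {φ φ' φ'' : ℝ → ℂ} {x : ℝ}
    (h1 : HasDerivAt φ (φ' x) x) (h2 : HasDerivAt φ' (φ'' x) x)
    (hode : -φ'' x + 2 * I * α * φ' x + α ^ 2 * φ x = lam * φ x) :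
    HasDerivAt (fun y => α * ‖φ y‖ ^ 2 - (conj (φ y) * φ' y).im) (lam.im * ‖φ x‖ ^ 2) x := by
  refine ((h1.norm_sq.const_mul α).sub (h1.im_conj_mul h2)).congr_deriv ?_
  rw [im_conj_mul_of_gauged_eq hode, Complex.inner]
  ring

theorem pt_boundary_current_identity_general
    (a α β : ℝ) (ha : 0 < a) (lam : ℂ)
    (φ φ' φ'' : ℝ → ℂ)
    (hd1 : ∀ x ∈ Set.Icc (-a) a, HasDerivAt φ (φ' x) x)
    (hd2 : ∀ x ∈ Set.Icc (-a) a, HasDerivAt φ' (φ'' x) x)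
    (hode : ∀ x ∈ Set.Icc (-a) a,
      -φ'' x + 2 * Complex.I * (α : ℂ) * φ' x + (α : ℂ) ^ 2 * φ x = lam * φ x)
    (hbc1 : φ' a + (β : ℂ) * φ a = 0)
    (hbc2 : φ' (-a) - (β : ℂ) * φ (-a) = 0) :
    α * (‖φ a‖ ^ 2 - ‖φ (-a)‖ ^ 2) = lam.im * ∫ x in (-a)..a, ‖φ x‖ ^ 2 := by
  have hIcc : Set.uIcc (-a) a = Set.Icc (-a) a := Set.uIcc_of_le (by linarith)
  have hflux : ∀ x ∈ Set.uIcc (-a) a, HasDerivAt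
      (fun y => α * ‖φ y‖ ^ 2 - (conj (φ y) * φ' y).im) (lam.im * ‖φ x‖ ^ 2) x := by
    rw [hIcc]
    exact fun x hx => hasDerivAt_gauged_flux (hd1 x hx) (hd2 x hx) (hode x hx)
  have hint : IntervalIntegrable (fun x => lam.im * ‖φ x‖ ^ 2) MeasureTheory.volume (-a) a := by
    have hφ : ContinuousOn φ (Set.Icc (-a) a) :=
      fun x hx => (hd1 x hx).continuousAt.continuousWithinAt
    refine ContinuousOn.intervalIntegrable ?_
    rw [hIcc]
    exact continuousOn_const.mul (hφ.norm.pow 2)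
  have hJa : (conj (φ a) * φ' a).im = 0 :=
    im_conj_mul_eq_zero_of_eq_ofReal_mul (r := -β) (by push_cast; linear_combination hbc1)
  have hJb : (conj (φ (-a)) * φ' (-a)).im = 0 :=
    im_conj_mul_eq_zero_of_eq_ofReal_mul (r := β) (by linear_combination hbc2)
  rw [← intervalIntegral.integral_const_mul,
    intervalIntegral.integral_eq_sub_of_hasDerivAt hflux hint, hJa, hJb]
  ring

/-- the identity `α(|φ(a)|² - |φ(-a)|²) = Im λ · ∫|φ|²`
for solutions of the gauged problem with Robin boundary conditions. -/
theorem pt_boundary_current_identity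
    (a α β : ℝ) (ha : 0 < a) (lam : ℂ)
    (φ φ' φ'' : ℝ → ℂ)
    (hd1 : ∀ x ∈ Set.Icc (-a) a, HasDerivAt φ (φ' x) x)
    (hd2 : ∀ x ∈ Set.Icc (-a) a, HasDerivAt φ' (φ'' x) x)
    (hcont : ContinuousOn φ'' (Set.Icc (-a) a))
    (hode : ∀ x ∈ Set.Icc (-a) a,
      -φ'' x + 2 * Complex.I * (α : ℂ) * φ' x + (α : ℂ) ^ 2 * φ x = lam * φ x)
    (hbc1 : φ' a + (β : ℂ) * φ a = 0)
    (hbc2 : φ' (-a) - (β : ℂ) * φ (-a) = 0) :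
    α * (‖φ a‖ ^ 2 - ‖φ (-a)‖ ^ 2) = lam.im * ∫ x in (-a)..a, ‖φ x‖ ^ 2 :=
  pt_boundary_current_identity_general a α β ha lam φ φ' φ'' hd1 hd2 hode hbc1 hbc2
end

section
/- Let a>0, α,β∈ℝ, λ∈ℂ, and let φ:[-a,a]→ℂ be twice continuously differentiable with −φ″(x)+2iαφ′(x)+α²φ(x)=λφ(x) for all x∈[-a,a], φ′(a)+βφ(a)=0 and φ′(−a)−βφ(−a)=0. Then −αβ²·(|φ(a)|²−|φ(−a)|²) = Im(λ)·( ∫_{−a}^{a}|φ′(x)|² dx + β(|φ(a)|²+|φ(−a)|²) ). -/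
/-!
Multiplying the equation by `conj φ''` and taking imaginary parts turns it into an exact
derivative: along any solution, `Im (conj φ' · (iα φ' + (α² - λ) φ))` has derivative
`-Im λ · |φ'|²`. Integrating over `[-a, a]` and evaluating this current at the endpoints with
the Robin conditions `φ'(±a) = ∓β φ(±a)` gives the identity.
-/

open Complex Set intervalIntegral

def gaugeCurrent (α : ℝ) (lam v p : ℂ) : ℂ :=
  star p * (I * α * p + (α ^ 2 - lam) * v)

lemma im_gaugeCurrent_deriv {α : ℝ} {lam v p q : ℂ}
    (hq : -q + 2 * I * α * p + α ^ 2 * v = lam * v) :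
    (star q * (I * α * p + (α ^ 2 - lam) * v) + star p * (I * α * q + (α ^ 2 - lam) * p)).im
      = -lam.im * ‖p‖ ^ 2 := by
  obtain rfl : q = 2 * I * α * p + (α ^ 2 - lam) * v := by linear_combination -hq
  simp only [star_def, add_im, mul_im, mul_re, add_re, sub_re, sub_im, conj_re, conj_im, I_re,
    I_im, ofReal_re, ofReal_im, re_ofNat, im_ofNat, ← ofReal_pow, Complex.sq_norm, normSq_apply]
  ring

lemma hasDerivAt_im_gaugeCurrent {α : ℝ} {lam q : ℂ} {φ φ' : ℝ → ℂ} {x : ℝ}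
    (hφ : HasDerivAt φ (φ' x) x) (hφ' : HasDerivAt φ' q x)
    (hode : -q + 2 * I * α * φ' x + α ^ 2 * φ x = lam * φ x) :
    HasDerivAt (fun y => (gaugeCurrent α lam (φ y) (φ' y)).im) (-lam.im * ‖φ' x‖ ^ 2) x := by
  have hcurrent : HasDerivAt (fun y => gaugeCurrent α lam (φ y) (φ' y))
      (star q * (I * α * φ' x + (α ^ 2 - lam) * φ x)
        + star (φ' x) * (I * α * q + (α ^ 2 - lam) * φ' x)) x :=
    hφ'.star.mul ((hφ'.const_mul (I * α)).add (hφ.const_mul (α ^ 2 - lam)))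
  rw [← im_gaugeCurrent_deriv hode]
  exact imCLM.hasFDerivAt.comp_hasDerivAt x hcurrent

lemma im_gaugeCurrent_ofReal_mul (α c : ℝ) (lam v : ℂ) :
    (gaugeCurrent α lam v (c * v)).im = (α * c ^ 2 - c * lam.im) * ‖v‖ ^ 2 := by
  simp only [gaugeCurrent, star_def, add_im, mul_im, mul_re, add_re, sub_re, sub_im, conj_re,
    conj_im, I_re, I_im, ofReal_re, ofReal_im, ← ofReal_pow, Complex.sq_norm, normSq_apply]
  ring

theorem pt_second_integral_identity_general
    (a α β : ℝ) (ha : 0 < a) (lam : ℂ)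
    (φ φ' φ'' : ℝ → ℂ)
    (hd1 : ∀ x ∈ Set.Icc (-a) a, HasDerivAt φ (φ' x) x)
    (hd2 : ∀ x ∈ Set.Icc (-a) a, HasDerivAt φ' (φ'' x) x)
    (hode : ∀ x ∈ Set.Icc (-a) a,
      -φ'' x + 2 * Complex.I * (α : ℂ) * φ' x + (α : ℂ) ^ 2 * φ x = lam * φ x)
    (hbc1 : φ' a + (β : ℂ) * φ a = 0)
    (hbc2 : φ' (-a) - (β : ℂ) * φ (-a) = 0) :
    -(α * β ^ 2) * (‖φ a‖ ^ 2 - ‖φ (-a)‖ ^ 2) =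
      lam.im * ((∫ x in (-a)..a, ‖φ' x‖ ^ 2)
        + β * (‖φ a‖ ^ 2 + ‖φ (-a)‖ ^ 2)) := by
  rw [← uIcc_of_le (by linarith : -a ≤ a)] at hd1 hd2 hode
  have hφ'_cont : ContinuousOn φ' (uIcc (-a) a) :=
    fun x hx => (hd2 x hx).continuousAt.continuousWithinAt
  have hftc := integral_eq_sub_of_hasDerivAt
    (fun x hx => hasDerivAt_im_gaugeCurrent (hd1 x hx) (hd2 x hx) (hode x hx))
    (((continuous_norm.comp_continuousOn hφ'_cont).pow 2).const_smul (-lam.im)).intervalIntegrable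
  have hright : φ' a = ((-β : ℝ) : ℂ) * φ a := by push_cast; linear_combination hbc1
  have hleft : φ' (-a) = (β : ℂ) * φ (-a) := by linear_combination hbc2
  rw [intervalIntegral.integral_const_mul, hright, hleft, im_gaugeCurrent_ofReal_mul,
    im_gaugeCurrent_ofReal_mul] at hftc
  linear_combination hftc

/-- the identity
`-αβ²(|φ(a)|² - |φ(-a)|²) = Im λ · ( ∫|φ'|² + β(|φ(a)|² + |φ(-a)|²) )`
for solutions of the gauged problem with Robin boundary conditions. -/
theorem pt_second_integral_identity
    (a α β : ℝ) (ha : 0 < a) (lam : ℂ)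
    (φ φ' φ'' : ℝ → ℂ)
    (hd1 : ∀ x ∈ Set.Icc (-a) a, HasDerivAt φ (φ' x) x)
    (hd2 : ∀ x ∈ Set.Icc (-a) a, HasDerivAt φ' (φ'' x) x)
    (hcont : ContinuousOn φ'' (Set.Icc (-a) a))
    (hode : ∀ x ∈ Set.Icc (-a) a,
      -φ'' x + 2 * Complex.I * (α : ℂ) * φ' x + (α : ℂ) ^ 2 * φ x = lam * φ x)
    (hbc1 : φ' a + (β : ℂ) * φ a = 0)
    (hbc2 : φ' (-a) - (β : ℂ) * φ (-a) = 0) :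
    -(α * β ^ 2) * (‖φ a‖ ^ 2 - ‖φ (-a)‖ ^ 2) =
      lam.im * ((∫ x in (-a)..a, ‖φ' x‖ ^ 2)
        + β * (‖φ a‖ ^ 2 + ‖φ (-a)‖ ^ 2)) :=
  pt_second_integral_identity_general a α β ha lam φ φ' φ'' hd1 hd2 hode hbc1 hbc2
end

section
/- Let a>0, α∈ℝ, β>0, m∈ℤ and λ∈ℂ. Suppose ψ:[-a,a]→ℂ is twice continuously differentiable, not identically zero, satisfies −ψ″(x)+m²ψ(x)=λψ(x) for all x∈[-a,a], ψ′(a)+(iα+β)ψ(a)=0 and ψ′(−a)+(iα−β)ψ(−a)=0. Then λ is a real number. -/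
/-!
Write `lam - m² = k²`. On `[-a, a]` the equation is `ψ'' = -k² ψ`, and the trigonometric solutions
satisfying each boundary condition separately have vanishing Wronskian with `ψ`; since `ψ ≢ 0`
they are proportional, which yields the secular equation
`(k² - α² - β²) sin (2ak) = 2βk cos (2ak)`. Multiplying it by `conj (k sin (2ak))` and taking
imaginary parts gives `Im k (|k|² + α² + β²) |sin (2ak)|² = -β |k|² sinh (4a Im k)`, whose two sides
have opposite signs unless `Im k = 0`. Hence `k`, and with it `lam = m² + k²`, is real.
-/

open Complex Set ComplexConjugate

noncomputable section

def trigComb (k : ℂ) (x₀ : ℝ) (p q : ℂ) (x : ℝ) : ℂ :=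
  p * cos (k * (x - x₀)) + q * sin (k * (x - x₀))

def SolvesOn (μ : ℂ) (s : Set ℝ) (f f' : ℝ → ℂ) : Prop :=
  ∀ x ∈ s, HasDerivAt f (f' x) x ∧ HasDerivAt f' (μ * f x) x

def wronskian (f f' g g' : ℝ → ℂ) (x : ℝ) : ℂ :=
  f x * g' x - f' x * g x

end

@[simp]
lemma trigComb_self (k : ℂ) (x₀ : ℝ) (p q : ℂ) : trigComb k x₀ p q x₀ = p := by
  simp [trigComb]

lemma hasDerivAt_trigComb (k : ℂ) (x₀ : ℝ) (p q : ℂ) (x : ℝ) :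
    HasDerivAt (trigComb k x₀ p q) (trigComb k x₀ (q * k) (-(p * k)) x) x := by
  have hlin : HasDerivAt (fun w : ℂ => k * (w - x₀)) k x := by
    simpa using ((hasDerivAt_id (x : ℂ)).sub_const (x₀ : ℂ)).const_mul k
  have hc : HasDerivAt (fun w : ℂ => p * cos (k * (w - x₀)) + q * sin (k * (w - x₀)))
      (p * (-sin (k * (x - x₀)) * k) + q * (cos (k * (x - x₀)) * k)) x :=
    (((hasDerivAt_cos _).comp _ hlin).const_mul p).add
      (((hasDerivAt_sin _).comp _ hlin).const_mul q)
  refine hc.comp_ofReal.congr_deriv ?_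
  simp only [trigComb]
  ring

lemma solvesOn_trigComb (k : ℂ) (x₀ : ℝ) (p q : ℂ) (s : Set ℝ) :
    SolvesOn (-k ^ 2) s (trigComb k x₀ p q) (trigComb k x₀ (q * k) (-(p * k))) := by
  refine fun x _ => ⟨hasDerivAt_trigComb k x₀ p q x, ?_⟩
  convert hasDerivAt_trigComb k x₀ (q * k) (-(p * k)) x using 1
  simp only [trigComb]
  ring

section Wronskian

variable {μ : ℂ} {s : Set ℝ}

lemma wronskian_eq_of_mem {f f' g g' : ℝ → ℂ} (hs : Convex ℝ s) (hf : SolvesOn μ s f f')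
    (hg : SolvesOn μ s g g') {x y : ℝ} (hx : x ∈ s) (hy : y ∈ s) :
    wronskian f f' g g' x = wronskian f f' g g' y := by
  have hderiv : ∀ t ∈ s, HasDerivAt (wronskian f f' g g') 0 t := by
    intro t ht
    exact (((hf t ht).1.mul (hg t ht).2).sub ((hf t ht).2.mul (hg t ht).1)).congr_deriv
      (by ring)
  have hle := hs.norm_image_sub_le_of_norm_hasDerivWithin_le (C := 0)
    (fun t ht => (hderiv t ht).hasDerivWithinAt) (fun _ _ => by simp) hy hx
  rw [zero_mul, norm_le_zero_iff, sub_eq_zero] at hle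
  exact hle

lemma wronskian_eq_zero_of_wronskian_eq_zero {ψ ψ' u u' v v' : ℝ → ℂ} (hs : Convex ℝ s)
    (hψ : SolvesOn μ s ψ ψ') (hu : SolvesOn μ s u u') (hv : SolvesOn μ s v v')
    {x₀ p q r : ℝ} (hx₀ : x₀ ∈ s) (hψx₀ : ψ x₀ ≠ 0) (hp : p ∈ s) (hq : q ∈ s) (hr : r ∈ s)
    (hψu : wronskian ψ ψ' u u' p = 0) (hψv : wronskian ψ ψ' v v' q = 0) :
    wronskian u u' v v' r = 0 := by
  rw [← wronskian_eq_of_mem hs hψ hu hx₀ hp] at hψu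
  rw [← wronskian_eq_of_mem hs hψ hv hx₀ hq] at hψv
  rw [wronskian_eq_of_mem hs hu hv hr hx₀]
  have h : ψ x₀ * wronskian u u' v v' x₀ = 0 := by
    simp only [wronskian] at hψu hψv ⊢
    linear_combination u x₀ * hψv - v x₀ * hψu
  exact (mul_eq_zero.1 h).resolve_left hψx₀

end Wronskian

lemma secular_eq_of_robin_eigenfunction {x₁ x₂ : ℝ} (hx : x₁ ≤ x₂) {γ₁ γ₂ k : ℂ} {ψ ψ' : ℝ → ℂ}
    (hψ : SolvesOn (-k ^ 2) (Icc x₁ x₂) ψ ψ') (hne : ∃ x ∈ Icc x₁ x₂, ψ x ≠ 0)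
    (h₁ : ψ' x₁ + γ₁ * ψ x₁ = 0) (h₂ : ψ' x₂ + γ₂ * ψ x₂ = 0) :
    (k ^ 2 + γ₁ * γ₂) * sin (k * (x₂ - x₁ : ℝ)) = (γ₂ - γ₁) * k * cos (k * (x₂ - x₁ : ℝ)) := by
  rcases eq_or_ne k 0 with rfl | hk
  · simp
  obtain ⟨x₀, hx₀, hψx₀⟩ := hne
  have hx₁ : x₁ ∈ Icc x₁ x₂ := left_mem_Icc.2 hx
  have hx₂ : x₂ ∈ Icc x₁ x₂ := right_mem_Icc.2 hx
  -- `trigComb k xᵢ k (-γᵢ)` satisfies the boundary condition at `xᵢ`; the Wronskian of the two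
  -- at `x₂` is `-k` times the difference of the two sides of the secular equation.
  have hW := wronskian_eq_zero_of_wronskian_eq_zero (convex_Icc x₁ x₂) hψ
    (solvesOn_trigComb k x₂ k (-γ₂) _) (solvesOn_trigComb k x₁ k (-γ₁) _) hx₀ hψx₀ hx₂ hx₁ hx₂
    (by simp only [wronskian, trigComb_self]; linear_combination -k * h₂)
    (by simp only [wronskian, trigComb_self]; linear_combination -k * h₁)
  simp only [wronskian, trigComb, sub_self, mul_zero, cos_zero, sin_zero, ← ofReal_sub] at hW
  have h : k * ((k ^ 2 + γ₁ * γ₂) * sin (k * (x₂ - x₁ : ℝ))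
      - (γ₂ - γ₁) * k * cos (k * (x₂ - x₁ : ℝ))) = 0 := by
    linear_combination -hW
  linear_combination (mul_eq_zero.1 h).resolve_left hk

lemma im_cos_mul_conj_sin (z : ℂ) : (cos z * conj (sin z)).im = -Real.sinh (2 * z.im) / 2 := by
  have hprod : cos z * sin (conj z) = (sin (conj z + z) + sin (conj z - z)) / 2 := by
    rw [sin_add, sin_sub]; ring
  have hadd : conj z + z = ((2 * z.re : ℝ) : ℂ) := by rw [add_comm, add_conj]
  have hsub : conj z - z = -(((2 * z.im : ℝ) : ℂ) * I) := by rw [← sub_conj]; ring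
  rw [← sin_conj, hprod, hadd, hsub, sin_neg, sin_mul_I, ← ofReal_sin, ← ofReal_sinh]
  simp only [div_im, add_im, neg_im, mul_im, ofReal_re, ofReal_im, I_re, I_im, add_re,
    neg_re, mul_re, re_ofNat, im_ofNat, normSq_ofNat]
  ring

lemma im_eq_zero_of_secular_eq {β c g : ℝ} (hβ : 0 < β) (hc : 0 < c) (hg : 0 ≤ g) {k : ℂ}
    (h : (k ^ 2 - g) * sin (k * c) = 2 * β * k * cos (k * c)) : k.im = 0 := by
  by_contra hk
  have hk0 : k ≠ 0 := fun h0 => hk (by simp [h0])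
  have hsin : sin (k * c) ≠ 0 := by
    intro hs
    have hcos : cos (k * c) = 0 := by
      rw [hs, mul_zero] at h
      exact (mul_eq_zero.1 h.symm).resolve_left (by simp [hβ.ne', hk0])
    simpa [hs, hcos] using sin_sq_add_cos_sq (k * c)
  have hconj := congrArg (fun w => (conj k * conj (sin (k * c)) * w).im) h
  have hlhs : (conj k * conj (sin (k * c)) * ((k ^ 2 - g) * sin (k * c))).im
      = k.im * (normSq k + g) * normSq (sin (k * c)) := by
    have : conj k * conj (sin (k * c)) * ((k ^ 2 - g) * sin (k * c))
        = ((k ^ 2 - g) * conj k) * (normSq (sin (k * c)) : ℂ) := by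
      rw [normSq_eq_conj_mul_self]; ring
    rw [this, mul_im, ofReal_re, ofReal_im, mul_zero, zero_add]
    simp only [pow_two, mul_im, mul_re, sub_im, sub_re, conj_re, conj_im, ofReal_re, ofReal_im,
      normSq_apply]
    ring
  have hrhs : (conj k * conj (sin (k * c)) * (2 * β * k * cos (k * c))).im
      = -β * normSq k * Real.sinh (2 * (k.im * c)) := by
    have : conj k * conj (sin (k * c)) * (2 * β * k * cos (k * c))
        = ((2 * β * normSq k : ℝ) : ℂ) * (cos (k * c) * conj (sin (k * c))) := by
      push_cast; rw [normSq_eq_conj_mul_self]; ring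
    rw [this, im_ofReal_mul, im_cos_mul_conj_sin, mul_im, ofReal_re, ofReal_im, mul_zero, zero_add]
    ring
  rw [hlhs, hrhs] at hconj
  have hpos : 0 < k.im ^ 2 * (normSq k + g) * normSq (sin (k * c)) := by
    have hk2 := normSq_pos.2 hk0
    have hsin2 := normSq_pos.2 hsin
    positivity
  have hsinh : 0 ≤ k.im * Real.sinh (2 * (k.im * c)) := by
    rcases le_total 0 k.im with him | him
    · exact mul_nonneg him (Real.sinh_nonneg_iff.2 (by positivity))
    · exact mul_nonneg_of_nonpos_of_nonpos him
        (Real.sinh_nonpos_iff.2 (by nlinarith))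
  have hsq : k.im ^ 2 * (normSq k + g) * normSq (sin (k * c))
      = -(β * normSq k * (k.im * Real.sinh (2 * (k.im * c)))) := by
    linear_combination k.im * hconj
  nlinarith [mul_nonneg (mul_nonneg hβ.le (normSq_nonneg k)) hsinh]

theorem pt_zero_curvature_beta_pos_real_general
    (a α β : ℝ) (ha : 0 < a) (hβ : 0 < β) (m : ℤ) (lam : ℂ)
    (ψ ψ' ψ'' : ℝ → ℂ)
    (hd1 : ∀ x ∈ Set.Icc (-a) a, HasDerivAt ψ (ψ' x) x)
    (hd2 : ∀ x ∈ Set.Icc (-a) a, HasDerivAt ψ' (ψ'' x) x)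
    (hne : ∃ x ∈ Set.Icc (-a) a, ψ x ≠ 0)
    (hode : ∀ x ∈ Set.Icc (-a) a, -ψ'' x + (m : ℂ) ^ 2 * ψ x = lam * ψ x)
    (hbc1 : ψ' a + (Complex.I * (α : ℂ) + (β : ℂ)) * ψ a = 0)
    (hbc2 : ψ' (-a) + (Complex.I * (α : ℂ) - (β : ℂ)) * ψ (-a) = 0) :
    ∃ r : ℝ, lam = (r : ℂ) := by
  obtain ⟨k, hk⟩ := IsAlgClosed.exists_pow_nat_eq (lam - (m : ℂ) ^ 2) two_pos
  have hψ : SolvesOn (-k ^ 2) (Icc (-a) a) ψ ψ' := fun x hx =>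
    ⟨hd1 x hx, by convert hd2 x hx using 1; linear_combination hode x hx - hk * ψ x⟩
  have hsec := secular_eq_of_robin_eigenfunction (by linarith) hψ hne hbc2 hbc1
  have hg : ((α ^ 2 + β ^ 2 : ℝ) : ℂ) = α ^ 2 + β ^ 2 := by push_cast; ring
  have hkim : k.im = 0 := by
    refine im_eq_zero_of_secular_eq hβ (c := a - -a) (by linarith) (g := α ^ 2 + β ^ 2)
      (by positivity) ?_
    rw [hg]
    linear_combination hsec - (α : ℂ) ^ 2 * sin (k * (a - -a : ℝ)) * I_sq
  refine ⟨m ^ 2 + k.re ^ 2, ?_⟩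
  rw [← re_add_im k, hkim, ofReal_zero, zero_mul, add_zero] at hk
  push_cast
  linear_combination -hk

/-- for `β > 0` the spectrum of the zero-curvature Hamiltonian
`H_{I(0)}^m(α, β)` with separated PT-symmetric boundary conditions is real. -/
theorem pt_zero_curvature_beta_pos_real
    (a α β : ℝ) (ha : 0 < a) (hβ : 0 < β) (m : ℤ) (lam : ℂ)
    (ψ ψ' ψ'' : ℝ → ℂ)
    (hd1 : ∀ x ∈ Set.Icc (-a) a, HasDerivAt ψ (ψ' x) x)
    (hd2 : ∀ x ∈ Set.Icc (-a) a, HasDerivAt ψ' (ψ'' x) x)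
    (hcont : ContinuousOn ψ'' (Set.Icc (-a) a))
    (hne : ∃ x ∈ Set.Icc (-a) a, ψ x ≠ 0)
    (hode : ∀ x ∈ Set.Icc (-a) a, -ψ'' x + (m : ℂ) ^ 2 * ψ x = lam * ψ x)
    (hbc1 : ψ' a + (Complex.I * (α : ℂ) + (β : ℂ)) * ψ a = 0)
    (hbc2 : ψ' (-a) + (Complex.I * (α : ℂ) - (β : ℂ)) * ψ (-a) = 0) :
    ∃ r : ℝ, lam = (r : ℂ) :=
  pt_zero_curvature_beta_pos_real_general a α β ha hβ m lam ψ ψ' ψ'' hd1 hd2 hne hode hbc1 hbc2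
end

section
/- Let a>0, α,β∈ℝ and k∈ℂ with k≠0. Assume (k²−α²−β²)·sin(2ka) − 2βk·cos(2ka) = 0 and k·cos(ka)+(iα+β)·sin(ka) ≠ 0. Then the function ψ(x) := cos(kx) + ((k·sin(ka) − (iα+β)·cos(ka)) / (k·cos(ka) + (iα+β)·sin(ka)))·sin(kx) satisfies −ψ″(x)=k²ψ(x) for all x∈[-a,a], ψ′(a)+(iα+β)ψ(a)=0 and ψ′(−a)+(iα−β)ψ(−a)=0, and ψ(0)=1, so ψ is not identically zero. -/
open Complex

/-!
Every combination `A cos (k x) + B sin (k x)` solves `-ψ'' = k² ψ`, and `ψ 0 = A`. With `A = 1` the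
coefficient `B` of the eigenfunction is chosen exactly so that the Robin condition at `a` holds;
by the parity of `cos` and `sin`, the condition at `-a` then reduces to the characteristic equation
`2 sin(ka) cos(ka) (k² + μν) + k (ν - μ) (cos²(ka) - sin²(ka)) = 0`, where `μ = iα + β` and
`ν = iα - β`, so that `μν = -α² - β²` and `ν - μ = -2β`.
-/

section TrigCombination

variable (k A B : ℂ)

theorem hasDerivAt_cos_mul_ofReal (x : ℝ) :
    HasDerivAt (fun x : ℝ => cos (k * x)) (-sin (k * x) * k) x := by
  simpa using ((hasDerivAt_cos (k * x)).comp (x : ℂ) ((hasDerivAt_id (x : ℂ)).const_mul k)).comp_ofReal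

theorem hasDerivAt_sin_mul_ofReal (x : ℝ) :
    HasDerivAt (fun x : ℝ => sin (k * x)) (cos (k * x) * k) x := by
  simpa using ((hasDerivAt_sin (k * x)).comp (x : ℂ) ((hasDerivAt_id (x : ℂ)).const_mul k)).comp_ofReal

theorem deriv_cos_mul_add_sin_mul :
    deriv (fun x : ℝ => A * cos (k * x) + B * sin (k * x))
      = fun x : ℝ => (k * B) * cos (k * x) + -(k * A) * sin (k * x) := by
  funext x
  refine (((hasDerivAt_cos_mul_ofReal k x).const_mul A).add
    ((hasDerivAt_sin_mul_ofReal k x).const_mul B)).deriv.trans ?_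
  ring

theorem neg_deriv_deriv_cos_mul_add_sin_mul (x : ℝ) :
    -deriv (deriv fun x : ℝ => A * cos (k * x) + B * sin (k * x)) x
      = k ^ 2 * (A * cos (k * x) + B * sin (k * x)) := by
  rw [deriv_cos_mul_add_sin_mul, deriv_cos_mul_add_sin_mul]
  ring

end TrigCombination

theorem robin_left_of_char {k μ ν s c C : ℂ} (hden : k * c + μ * s ≠ 0)
    (hC : C * (k * c + μ * s) = k * s - μ * c)
    (hchar : 2 * s * c * (k ^ 2 + μ * ν) + k * (ν - μ) * (c ^ 2 - s ^ 2) = 0) :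
    k * C * c + k * s + ν * (c - C * s) = 0 := by
  refine (mul_eq_zero.mp ?_).resolve_left hden
  linear_combination (k * c - ν * s) * hC + hchar

theorem pt_zero_curvature_eigenfunction_general
    (a α β : ℝ) (k : ℂ)
    (heq : (k ^ 2 - (α : ℂ) ^ 2 - (β : ℂ) ^ 2) * Complex.sin (2 * k * (a : ℂ))
      - 2 * (β : ℂ) * k * Complex.cos (2 * k * (a : ℂ)) = 0)
    (hden : k * Complex.cos (k * (a : ℂ))
      + (Complex.I * (α : ℂ) + (β : ℂ)) * Complex.sin (k * (a : ℂ)) ≠ 0)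
    (ψ : ℝ → ℂ)
    (hψ : ψ = fun x : ℝ => Complex.cos (k * (x : ℂ))
      + ((k * Complex.sin (k * (a : ℂ))
            - (Complex.I * (α : ℂ) + (β : ℂ)) * Complex.cos (k * (a : ℂ)))
          / (k * Complex.cos (k * (a : ℂ))
            + (Complex.I * (α : ℂ) + (β : ℂ)) * Complex.sin (k * (a : ℂ))))
        * Complex.sin (k * (x : ℂ))) :
    (∀ x ∈ Set.Icc (-a) a, -deriv (deriv ψ) x = k ^ 2 * ψ x) ∧
    deriv ψ a + (Complex.I * (α : ℂ) + (β : ℂ)) * ψ a = 0 ∧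
    deriv ψ (-a) + (Complex.I * (α : ℂ) - (β : ℂ)) * ψ (-a) = 0 ∧
    ψ 0 = 1 := by
  set μ : ℂ := I * α + β
  set C := (k * sin (k * a) - μ * cos (k * a)) / (k * cos (k * a) + μ * sin (k * a))
  have hC : C * (k * cos (k * a) + μ * sin (k * a)) = k * sin (k * a) - μ * cos (k * a) :=
    div_mul_cancel₀ _ hden
  have hchar : 2 * sin (k * a) * cos (k * a) * (k ^ 2 + μ * (I * α - β))
      + k * ((I * α - β) - μ) * (cos (k * a) ^ 2 - sin (k * a) ^ 2) = 0 := by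
    rw [show 2 * k * (a : ℂ) = 2 * (k * a) by ring, sin_two_mul, cos_two_mul] at heq
    linear_combination heq + 2 * β * k * sin_sq_add_cos_sq (k * a)
      + 2 * sin (k * a) * cos (k * a) * α ^ 2 * I_sq
  have hψ₁ : ψ = fun x : ℝ => 1 * cos (k * x) + C * sin (k * x) := by simpa using hψ
  subst hψ₁
  refine ⟨fun x _ => neg_deriv_deriv_cos_mul_add_sin_mul k 1 C x, ?_, ?_, by simp⟩
  · rw [deriv_cos_mul_add_sin_mul]
    linear_combination hC
  · rw [deriv_cos_mul_add_sin_mul]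
    simp only [ofReal_neg, mul_neg, cos_neg, sin_neg]
    linear_combination robin_left_of_char hden hC hchar

/-- the explicit eigenfunction of the zero-curvature PT-symmetric
Robin problem corresponding to the eigenvalue `λ = k²`. -/
theorem pt_zero_curvature_eigenfunction
    (a α β : ℝ) (ha : 0 < a) (k : ℂ) (hk : k ≠ 0)
    (heq : (k ^ 2 - (α : ℂ) ^ 2 - (β : ℂ) ^ 2) * Complex.sin (2 * k * (a : ℂ))
      - 2 * (β : ℂ) * k * Complex.cos (2 * k * (a : ℂ)) = 0)
    (hden : k * Complex.cos (k * (a : ℂ))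
      + (Complex.I * (α : ℂ) + (β : ℂ)) * Complex.sin (k * (a : ℂ)) ≠ 0)
    (ψ : ℝ → ℂ)
    (hψ : ψ = fun x : ℝ => Complex.cos (k * (x : ℂ))
      + ((k * Complex.sin (k * (a : ℂ))
            - (Complex.I * (α : ℂ) + (β : ℂ)) * Complex.cos (k * (a : ℂ)))
          / (k * Complex.cos (k * (a : ℂ))
            + (Complex.I * (α : ℂ) + (β : ℂ)) * Complex.sin (k * (a : ℂ))))
        * Complex.sin (k * (x : ℂ))) :
    (∀ x ∈ Set.Icc (-a) a, -deriv (deriv ψ) x = k ^ 2 * ψ x) ∧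
    deriv ψ a + (Complex.I * (α : ℂ) + (β : ℂ)) * ψ a = 0 ∧
    deriv ψ (-a) + (Complex.I * (α : ℂ) - (β : ℂ)) * ψ (-a) = 0 ∧
    ψ 0 = 1 :=
  pt_zero_curvature_eigenfunction_general a α β k heq hden ψ hψ
end

section
/- Let m∈ℤ and let ψ:(−π/2,π/2)→ℂ be twice differentiable. Define φ(y):=(cos y)^{−1/2}·ψ(y) for y∈(−π/2,π/2). Then for every x∈(−π/2,π/2): −φ″(x) + tan(x)·φ′(x) + (m²/cos²x)·φ(x) = (cos x)^{−1/2}·( −ψ″(x) + V(x)·ψ(x) ), where V(x) := (8m² − 3 − cos(2x)) / (8·cos²x). -/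
/-! With `w = cos ^ p` one has `w' = -p tan · w`, so for `φ = w ψ` the first-order part of
`-φ'' + tan φ'` is `(2p + 1) tan · w ψ'`, which vanishes exactly for `p = -1/2`. What remains is
`w (-ψ'' + V ψ)`, and `V = m²/cos² + (tan² - 2/cos²)/4` is the stated potential by
`cos 2x = 2cos²x - 1` and `sin² + cos² = 1`. -/

open Real

lemma hasDerivAt_cos_rpow {x : ℝ} (p : ℝ) (hx : cos x ≠ 0) :
    HasDerivAt (fun y => cos y ^ p) (-p * tan x * cos x ^ p) x := by
  convert (hasDerivAt_cos x).rpow_const (p := p) (Or.inl hx) using 1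
  rw [rpow_sub_one hx, tan_eq_sin_div_cos]
  field_simp

lemma hasDerivAt_neg_mul_tan_mul_cos_rpow {x : ℝ} (p : ℝ) (hx : cos x ≠ 0) :
    HasDerivAt (fun y => -p * tan y * cos y ^ p)
      (-p * (1 / cos x ^ 2 - p * tan x ^ 2) * cos x ^ p) x := by
  refine (((hasDerivAt_tan hx).const_mul (-p)).mul (hasDerivAt_cos_rpow p hx)).congr_deriv ?_
  ring

lemma hasDerivAt_deriv_ofReal_mul {w w' : ℝ → ℝ} {w'' : ℝ} {ψ ψ' : ℝ → ℂ} {ψ'' : ℂ} {x : ℝ}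
    (hw : HasDerivAt w (w' x) x) (hw' : HasDerivAt w' w'' x)
    (hψ : HasDerivAt ψ (ψ' x) x) (hψ' : HasDerivAt ψ' ψ'' x) :
    HasDerivAt (fun y => (w' y : ℂ) * ψ y + w y * ψ' y)
      (w'' * ψ x + 2 * w' x * ψ' x + w x * ψ'') x := by
  refine ((hw'.ofReal_comp.mul hψ).add (hw.ofReal_comp.mul hψ')).congr_deriv ?_
  ring

/-- the pointwise differential identity underlying the unitary
equivalence `U₊ψ = (cos x)^{-1/2} ψ` between the positive-curvature transverse
Hamiltonian `H_{I(+1)}^m` and `-d²/dx² + V` with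
`V(x) = (8m² - 3 - cos 2x)/(8 cos² x)`. -/
theorem pt_positive_curvature_transform
    (m : ℤ) (ψ ψ' ψ'' : ℝ → ℂ)
    (hd1 : ∀ x ∈ Set.Ioo (-(Real.pi / 2)) (Real.pi / 2), HasDerivAt ψ (ψ' x) x)
    (hd2 : ∀ x ∈ Set.Ioo (-(Real.pi / 2)) (Real.pi / 2), HasDerivAt ψ' (ψ'' x) x)
    (φ : ℝ → ℂ)
    (hφ : φ = fun y : ℝ => ((Real.cos y ^ (-(1 / 2 : ℝ)) : ℝ) : ℂ) * ψ y) :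
    ∃ φ' φ'' : ℝ → ℂ,
      (∀ x ∈ Set.Ioo (-(Real.pi / 2)) (Real.pi / 2), HasDerivAt φ (φ' x) x) ∧
      (∀ x ∈ Set.Ioo (-(Real.pi / 2)) (Real.pi / 2), HasDerivAt φ' (φ'' x) x) ∧
      ∀ x ∈ Set.Ioo (-(Real.pi / 2)) (Real.pi / 2),
        -φ'' x + (Real.tan x : ℂ) * φ' x
            + (((m : ℝ) ^ 2 / Real.cos x ^ 2 : ℝ) : ℂ) * φ x =
          ((Real.cos x ^ (-(1 / 2 : ℝ)) : ℝ) : ℂ) *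
            (-ψ'' x + (((8 * (m : ℝ) ^ 2 - 3 - Real.cos (2 * x))
              / (8 * Real.cos x ^ 2) : ℝ) : ℂ) * ψ x) := by
  subst hφ
  set p : ℝ := -(1 / 2)
  set w : ℝ → ℝ := fun y => cos y ^ p
  set w' : ℝ → ℝ := fun y => -p * tan y * cos y ^ p
  set w'' : ℝ → ℝ := fun y => -p * (1 / cos y ^ 2 - p * tan y ^ 2) * cos y ^ p
  refine ⟨fun y => (w' y : ℂ) * ψ y + w y * ψ' y,
    fun y => w'' y * ψ y + 2 * w' y * ψ' y + w y * ψ'' y, fun x hx => ?_, fun x hx => ?_,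
    fun x hx => ?_⟩
  · exact (hasDerivAt_cos_rpow p (cos_pos_of_mem_Ioo hx).ne').ofReal_comp.mul (hd1 x hx)
  · have hc := (cos_pos_of_mem_Ioo hx).ne'
    exact hasDerivAt_deriv_ofReal_mul (hasDerivAt_cos_rpow p hc)
      (hasDerivAt_neg_mul_tan_mul_cos_rpow p hc) (hd1 x hx) (hd2 x hx)
  · have hc : cos x ≠ 0 := (cos_pos_of_mem_Ioo hx).ne'
    have hV : (8 * (m : ℝ) ^ 2 - 3 - cos (2 * x)) / (8 * cos x ^ 2)
        = m ^ 2 / cos x ^ 2 + (tan x ^ 2 - 2 / cos x ^ 2) / 4 := by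
      rw [cos_two_mul, tan_eq_sin_div_cos]
      field_simp
      linear_combination (-8 : ℝ) * sin_sq_add_cos_sq x
    simp only [w, w', w'', hV]
    push_cast
    rw [show (p : ℂ) = -1 / 2 by norm_num [p]]
    ring
end

section
/- Let 0<a<π/2, α,β∈ℝ, m∈ℤ, and let ψ:[-a,a]→ℂ be twice continuously differentiable with ψ′(a)+(iα+β)ψ(a)=0 and ψ′(−a)+(iα−β)ψ(−a)=0. Define h[ψ] := ∫_{−a}^{a} conj(ψ(x))·( −ψ″(x) + tan(x)·ψ′(x) + (m²/cos²x)·ψ(x) )·cos(x) dx. Then Re h[ψ] = ∫_{−a}^{a}|ψ′(x)|²·cos(x) dx + ∫_{−a}^{a}(m²/cos²x)·|ψ(x)|²·cos(x) dx + β·cos(a)·(|ψ(a)|²+|ψ(−a)|²), and Im h[ψ] = α·cos(a)·(|ψ(a)|²−|ψ(−a)|²). -/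
/-!
Multiplying the operator by the weight `cos x` turns it into the divergence form
`-(cos · ψ')' + (m² / cos) ψ`, because `tan · cos = sin = -cos'`. One integration by parts then
moves a derivative onto `conj ψ`, leaving the nonnegative weighted Dirichlet and potential integrals
plus the boundary term `-[cos · conj ψ · ψ']₋ₐᵃ`. The boundary conditions express `ψ'(±a)` through
`ψ(±a)`, so the boundary term is `(iα + β) cos a |ψ a|² - (iα - β) cos a |ψ (-a)|²`.
-/

open intervalIntegral Set
open scoped Interval ComplexConjugate

theorem integral_conj_mul_neg_deriv_weight_mul_deriv {a b : ℝ} {ψ ψ' ψ'' : ℝ → ℂ}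
    {p p' : ℝ → ℝ} (hψ : ∀ x ∈ [[a, b]], HasDerivAt ψ (ψ' x) x)
    (hψ' : ∀ x ∈ [[a, b]], HasDerivAt ψ' (ψ'' x) x) (hψ'' : ContinuousOn ψ'' [[a, b]])
    (hp : ∀ x ∈ [[a, b]], HasDerivAt p (p' x) x) (hp' : ContinuousOn p' [[a, b]]) :
    ∫ x in a..b, conj (ψ x) * -(ψ'' x * p x + ψ' x * p' x) =
      ((∫ x in a..b, ‖ψ' x‖ ^ 2 * p x : ℝ) : ℂ)
        - (conj (ψ b) * ψ' b * p b - conj (ψ a) * ψ' a * p a) := by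
  have hconj : ∀ x ∈ [[a, b]], HasDerivAt (fun y ↦ conj (ψ y)) (conj (ψ' x)) x :=
    fun x hx ↦ (hψ x hx).star
  have hflux : ∀ x ∈ [[a, b]], HasDerivAt (fun y ↦ ψ' y * p y) (ψ'' x * p x + ψ' x * p' x) x :=
    fun x hx ↦ (hψ' x hx).mul (hp x hx).ofReal_comp
  have hψ'c : ContinuousOn ψ' [[a, b]] := fun x hx ↦ (hψ' x hx).continuousAt.continuousWithinAt
  have hpc : ContinuousOn p [[a, b]] := fun x hx ↦ (hp x hx).continuousAt.continuousWithinAt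
  have hint_conj : IntervalIntegrable (fun x ↦ conj (ψ' x)) MeasureTheory.volume a b :=
    (Complex.continuous_conj.comp_continuousOn hψ'c).intervalIntegrable
  have hint_flux : IntervalIntegrable (fun x ↦ ψ'' x * p x + ψ' x * p' x)
      MeasureTheory.volume a b := by
    apply ContinuousOn.intervalIntegrable
    fun_prop
  simp_rw [mul_neg]
  rw [integral_neg, integral_mul_deriv_eq_deriv_mul hconj hflux hint_conj hint_flux,
    ← integral_ofReal]
  have hdirichlet : ∀ x, conj (ψ' x) * (ψ' x * p x) = ((‖ψ' x‖ ^ 2 * p x : ℝ) : ℂ) := by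
    intro x
    push_cast
    rw [← mul_assoc, Complex.conj_mul']
  simp only [hdirichlet, mul_assoc]
  ring

theorem conj_mul_transverse_mul_cos_eq {x : ℝ} (hx : Real.cos x ≠ 0) (μ : ℝ) (z z' z'' : ℂ) :
    conj z * (-z'' + (Real.tan x : ℂ) * z' + ((μ / Real.cos x ^ 2 : ℝ) : ℂ) * z)
        * (Real.cos x : ℂ) =
      conj z * -(z'' * Real.cos x + z' * (-Real.sin x : ℝ))
        + ((μ / Real.cos x ^ 2 * ‖z‖ ^ 2 * Real.cos x : ℝ) : ℂ) := by
  have htan : (Real.tan x : ℂ) * Real.cos x = Real.sin x := by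
    rw [← Complex.ofReal_mul, Real.tan_mul_cos hx]
  simp only [Complex.ofReal_mul, Complex.ofReal_div, Complex.ofReal_pow, Complex.ofReal_neg]
  linear_combination conj z * z' * htan
    + (μ / (Real.cos x : ℂ) ^ 2 * Real.cos x) * Complex.conj_mul' z

theorem conj_mul_eq_neg_mul_sq_norm_of_add_mul_eq_zero {z z' k : ℂ} (h : z' + k * z = 0) :
    conj z * z' = -k * (‖z‖ : ℂ) ^ 2 := by
  linear_combination conj z * h - k * Complex.conj_mul' z

/-- real and imaginary parts of the quadratic form
`h[ψ] = (ψ, H_{I(+1)}^m ψ)` of the positive-curvature transverse Hamiltonian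
in the weighted space `L²((-a,a), cos x dx)`. -/
theorem pt_positive_curvature_numerical_range
    (a α β : ℝ) (ha0 : 0 < a) (ha : a < Real.pi / 2) (m : ℤ)
    (ψ ψ' ψ'' : ℝ → ℂ)
    (hd1 : ∀ x ∈ Set.Icc (-a) a, HasDerivAt ψ (ψ' x) x)
    (hd2 : ∀ x ∈ Set.Icc (-a) a, HasDerivAt ψ' (ψ'' x) x)
    (hcont : ContinuousOn ψ'' (Set.Icc (-a) a))
    (hbc1 : ψ' a + (Complex.I * (α : ℂ) + (β : ℂ)) * ψ a = 0)
    (hbc2 : ψ' (-a) + (Complex.I * (α : ℂ) - (β : ℂ)) * ψ (-a) = 0)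
    (h : ℂ)
    (hh : h = ∫ x in (-a)..a,
      (starRingEnd ℂ) (ψ x) *
        (-ψ'' x + (Real.tan x : ℂ) * ψ' x
          + (((m : ℝ) ^ 2 / Real.cos x ^ 2 : ℝ) : ℂ) * ψ x) * (Real.cos x : ℂ)) :
    h.re = (∫ x in (-a)..a, ‖ψ' x‖ ^ 2 * Real.cos x)
        + (∫ x in (-a)..a, ((m : ℝ) ^ 2 / Real.cos x ^ 2) * ‖ψ x‖ ^ 2 * Real.cos x)
        + β * Real.cos a * (‖ψ a‖ ^ 2 + ‖ψ (-a)‖ ^ 2) ∧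
    h.im = α * Real.cos a * (‖ψ a‖ ^ 2 - ‖ψ (-a)‖ ^ 2) := by
  have hIcc : Icc (-a) a = [[-a, a]] := (uIcc_of_le (by linarith)).symm
  rw [hIcc] at hd1 hd2 hcont
  have hcos : ∀ x ∈ [[-a, a]], Real.cos x ≠ 0 := by
    intro x hx
    rw [← hIcc] at hx
    exact (Real.cos_pos_of_mem_Ioo ⟨by linarith [hx.1], by linarith [hx.2]⟩).ne'
  have hψc : ContinuousOn ψ [[-a, a]] := fun x hx ↦ (hd1 x hx).continuousAt.continuousWithinAt
  have hψ'c : ContinuousOn ψ' [[-a, a]] := fun x hx ↦ (hd2 x hx).continuousAt.continuousWithinAt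
  have hint_kinetic : IntervalIntegrable
      (fun x ↦ conj (ψ x) * -(ψ'' x * Real.cos x + ψ' x * (-Real.sin x : ℝ)))
      MeasureTheory.volume (-a) a := by
    apply ContinuousOn.intervalIntegrable
    fun_prop
  have hint_potential : IntervalIntegrable
      (fun x ↦ (((m : ℝ) ^ 2 / Real.cos x ^ 2 * ‖ψ x‖ ^ 2 * Real.cos x : ℝ) : ℂ))
      MeasureTheory.volume (-a) a := by
    apply ContinuousOn.intervalIntegrable
    fun_prop (disch := intro x hx; exact pow_ne_zero 2 (hcos x hx))
  have hform : h = ((∫ x in (-a)..a, ‖ψ' x‖ ^ 2 * Real.cos x)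
        + (∫ x in (-a)..a, ((m : ℝ) ^ 2 / Real.cos x ^ 2) * ‖ψ x‖ ^ 2 * Real.cos x)
        + β * Real.cos a * (‖ψ a‖ ^ 2 + ‖ψ (-a)‖ ^ 2) : ℝ)
      + (α * Real.cos a * (‖ψ a‖ ^ 2 - ‖ψ (-a)‖ ^ 2) : ℝ) * Complex.I := by
    rw [hh, integral_congr fun x hx ↦ conj_mul_transverse_mul_cos_eq (hcos x hx) _ _ _ _,
      integral_add hint_kinetic hint_potential,
      integral_conj_mul_neg_deriv_weight_mul_deriv hd1 hd2 hcont
        (fun x _ ↦ Real.hasDerivAt_cos x) (by fun_prop),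
      intervalIntegral.integral_ofReal, conj_mul_eq_neg_mul_sq_norm_of_add_mul_eq_zero hbc1,
      conj_mul_eq_neg_mul_sq_norm_of_add_mul_eq_zero hbc2, Real.cos_neg]
    simp only [Complex.ofReal_add, Complex.ofReal_sub, Complex.ofReal_mul, Complex.ofReal_pow]
    ring
  rw [hform, ← Complex.mk_eq_add_mul_I]
  exact ⟨rfl, rfl⟩
end

section
/- Let a>0, b>0, c≥−1/b, φ₀∈ℝ, and let B be the 2×2 complex matrix with entries B₁₁=√(1+bc)·e^{iφ₀}, B₁₂=b, B₂₁=c, B₂₂=√(1+bc)·e^{−iφ₀}. Suppose ψ:[-a,a]→ℂ is continuously differentiable and satisfies ψ(a)=B₁₁ψ(−a)+B₁₂ψ′(−a) and ψ′(a)=B₂₁ψ(−a)+B₂₂ψ′(−a). Then the function χ(x):=conj(ψ(−x)) also satisfies χ(a)=B₁₁χ(−a)+B₁₂χ′(−a) and χ′(a)=B₂₁χ(−a)+B₂₂χ′(−a). -/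
/-! The boundary matrix `B` has determinant `(1 + bc) - bc = 1`, so the boundary condition can be
inverted: `Ψ(-a) = adj(B) Ψ(a)`. Under `ψ ↦ conj ψ(-·)` the endpoints `±a` swap and the derivative
changes sign, so the transformed function satisfies `Ψ(a) = J conj(adj B) J Ψ(-a)` with
`J = diag(1, -1)`; since `b, c` are real and `B₂₂ = conj B₁₁`, this matrix is `B` again. -/

open ComplexConjugate

theorem eq_adjugate_of_det_eq_one {R : Type*} [CommRing R] {p q r s u v w z : R}
    (hdet : p * s - q * r = 1) (hu : u = p * w + q * z) (hv : v = r * w + s * z) :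
    w = s * u - q * v ∧ z = -r * u + p * v := by
  subst hu hv
  exact ⟨by linear_combination -w * hdet, by linear_combination -z * hdet⟩

theorem conj_boundary_values_of_det_eq_one {p q r s u v w z : ℂ}
    (hdet : p * s - q * r = 1) (hq : conj q = q) (hr : conj r = r) (hs : conj s = p)
    (hu : u = p * w + q * z) (hv : v = r * w + s * z) :
    conj w = p * conj u + q * -conj v ∧ -conj z = r * conj u + s * -conj v := by
  obtain ⟨hw, hz⟩ := eq_adjugate_of_det_eq_one hdet hu hv
  have hp : conj p = s := by rw [← hs, Complex.conj_conj]
  constructor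
  · rw [hw, map_sub, map_mul, map_mul, hs, hq]; ring
  · rw [hz, map_add, map_mul, map_mul, map_neg, hr, hp]; ring

theorem HasDerivAt.conj_comp_neg {ψ : ℝ → ℂ} {d : ℂ} {x : ℝ} (h : HasDerivAt ψ d (-x)) :
    HasDerivAt (fun y => conj (ψ (-y))) (-conj d) x := by
  simpa using (h.scomp x (hasDerivAt_neg x)).star

theorem one_add_mul_nonneg_of_neg_inv_le {b c : ℝ} (hb : 0 < b) (hc : -(1 / b) ≤ c) :
    0 ≤ 1 + b * c := by
  have := mul_le_mul_of_nonneg_left hc hb.le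
  rw [mul_neg, mul_one_div_cancel hb.ne'] at this
  linarith

theorem sqrt_mul_exp_mul_sqrt_mul_exp_neg_sub {b c : ℝ} (hbc : 0 ≤ 1 + b * c) (φ : ℝ) :
    ((√(1 + b * c) : ℝ) : ℂ) * Complex.exp (Complex.I * φ) *
      (((√(1 + b * c) : ℝ) : ℂ) * Complex.exp (-(Complex.I * φ))) - b * c = 1 := by
  have hsq : ((√(1 + b * c) : ℝ) : ℂ) ^ 2 = 1 + b * c := by
    exact_mod_cast Real.sq_sqrt hbc
  have hexp : Complex.exp (Complex.I * φ) * Complex.exp (-(Complex.I * φ)) = 1 := by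
    rw [← Complex.exp_add, add_neg_cancel, Complex.exp_zero]
  linear_combination Complex.exp (Complex.I * φ) * Complex.exp (-(Complex.I * φ)) * hsq
    + (1 + b * c : ℂ) * hexp

theorem conj_ofReal_mul_exp_neg_I_mul (r φ : ℝ) :
    conj ((r : ℂ) * Complex.exp (-(Complex.I * φ))) = r * Complex.exp (Complex.I * φ) := by
  rw [map_mul, Complex.conj_ofReal, ← Complex.exp_conj, map_neg, map_mul, Complex.conj_I,
    Complex.conj_ofReal, neg_mul, neg_neg]

theorem pt_connected_bc_pt_invariant_general
    (a b c φ₀ : ℝ) (hb : 0 < b) (hc : -(1 / b) ≤ c)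
    (ψ ψ' : ℝ → ℂ)
    (hd : ∀ x ∈ Set.Icc (-a) a, HasDerivAt ψ (ψ' x) x)
    (hbc1 : ψ a = ((Real.sqrt (1 + b * c) : ℝ) : ℂ) * Complex.exp (Complex.I * (φ₀ : ℂ)) * ψ (-a)
      + (b : ℂ) * ψ' (-a))
    (hbc2 : ψ' a = (c : ℂ) * ψ (-a)
      + ((Real.sqrt (1 + b * c) : ℝ) : ℂ) * Complex.exp (-(Complex.I * (φ₀ : ℂ))) * ψ' (-a))
    (χ : ℝ → ℂ) (hχ : χ = fun x => (starRingEnd ℂ) (ψ (-x))) :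
    ∃ χ' : ℝ → ℂ,
      (∀ x ∈ Set.Icc (-a) a, HasDerivAt χ (χ' x) x) ∧
      χ a = ((Real.sqrt (1 + b * c) : ℝ) : ℂ) * Complex.exp (Complex.I * (φ₀ : ℂ)) * χ (-a)
        + (b : ℂ) * χ' (-a) ∧
      χ' a = (c : ℂ) * χ (-a)
        + ((Real.sqrt (1 + b * c) : ℝ) : ℂ) * Complex.exp (-(Complex.I * (φ₀ : ℂ))) * χ' (-a) := by
  have hdet := sqrt_mul_exp_mul_sqrt_mul_exp_neg_sub (one_add_mul_nonneg_of_neg_inv_le hb hc) φ₀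
  obtain ⟨h1, h2⟩ := conj_boundary_values_of_det_eq_one hdet (Complex.conj_ofReal b)
    (Complex.conj_ofReal c) (conj_ofReal_mul_exp_neg_I_mul _ φ₀) hbc1 hbc2
  subst hχ
  refine ⟨fun x => -conj (ψ' (-x)), fun x hx => (hd (-x) ?_).conj_comp_neg, ?_, ?_⟩
  · exact ⟨neg_le_neg hx.2, by linarith [hx.1]⟩
  · simpa only [neg_neg] using h1
  · simpa only [neg_neg] using h2

/-- the connected PT-symmetric boundary conditions with matrix
`B = (√(1+bc) e^{iφ₀}, b; c, √(1+bc) e^{-iφ₀})` are invariant under the PT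
operation `ψ ↦ conj(ψ(-·))`. -/
theorem pt_connected_bc_pt_invariant
    (a b c φ₀ : ℝ) (ha : 0 < a) (hb : 0 < b) (hc : -(1 / b) ≤ c)
    (ψ ψ' : ℝ → ℂ)
    (hd : ∀ x ∈ Set.Icc (-a) a, HasDerivAt ψ (ψ' x) x)
    (hcont : ContinuousOn ψ' (Set.Icc (-a) a))
    (hbc1 : ψ a = ((Real.sqrt (1 + b * c) : ℝ) : ℂ) * Complex.exp (Complex.I * (φ₀ : ℂ)) * ψ (-a)
      + (b : ℂ) * ψ' (-a))
    (hbc2 : ψ' a = (c : ℂ) * ψ (-a)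
      + ((Real.sqrt (1 + b * c) : ℝ) : ℂ) * Complex.exp (-(Complex.I * (φ₀ : ℂ))) * ψ' (-a))
    (χ : ℝ → ℂ) (hχ : χ = fun x => (starRingEnd ℂ) (ψ (-x))) :
    ∃ χ' : ℝ → ℂ,
      (∀ x ∈ Set.Icc (-a) a, HasDerivAt χ (χ' x) x) ∧
      χ a = ((Real.sqrt (1 + b * c) : ℝ) : ℂ) * Complex.exp (Complex.I * (φ₀ : ℂ)) * χ (-a)
        + (b : ℂ) * χ' (-a) ∧
      χ' a = (c : ℂ) * χ (-a)
        + ((Real.sqrt (1 + b * c) : ℝ) : ℂ) * Complex.exp (-(Complex.I * (φ₀ : ℂ))) * χ' (-a) :=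
  pt_connected_bc_pt_invariant_general a b c φ₀ hb hc ψ ψ' hd hbc1 hbc2 χ hχ
end

section
/- Let 0<a<π/2, b>0, c≥−1/b, φ₀∈ℝ, and let ψ:[-a,a]→ℂ be continuously differentiable. Define φ(y):=(cos y)^{−1/2}·ψ(y) for y∈[-a,a], and set t:=(1/2)·tan(a). Then φ satisfies φ(a)=√(1+bc)·e^{iφ₀}·φ(−a)+b·φ′(−a) and φ′(a)=c·φ(−a)+√(1+bc)·e^{−iφ₀}·φ′(−a) if and only if ψ satisfies ψ(a)=(√(1+bc)·e^{iφ₀}−t·b)·ψ(−a)+b·ψ′(−a) and ψ′(a)=(c−2t·√(1+bc)·cos(φ₀)+t²·b)·ψ(−a)+(√(1+bc)·e^{−iφ₀}−t·b)·ψ′(−a). -/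
/-- the unitary map `U₊ψ = (cos x)^{-1/2} ψ` transforms connected
PT-symmetric boundary conditions on the positively curved strip into modified
connected boundary conditions with matrix `B₊` (where `t = (1/2) tan a`). -/
theorem pt_positive_curvature_connected_bc
    (a b c φ₀ : ℝ) (ha0 : 0 < a) (ha : a < Real.pi / 2) (hb : 0 < b) (hc : -(1 / b) ≤ c)
    (ψ ψ' : ℝ → ℂ)
    (hd : ∀ x ∈ Set.Icc (-a) a, HasDerivAt ψ (ψ' x) x)
    (hcont : ContinuousOn ψ' (Set.Icc (-a) a))
    (φ : ℝ → ℂ)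
    (hφ : φ = fun y : ℝ => ((Real.cos y ^ (-(1 / 2 : ℝ)) : ℝ) : ℂ) * ψ y)
    (t : ℝ) (ht : t = Real.tan a / 2)
    (Da Db : ℂ) (hDa : HasDerivAt φ Da a) (hDb : HasDerivAt φ Db (-a)) :
    (φ a = ((Real.sqrt (1 + b * c) : ℝ) : ℂ) * Complex.exp (Complex.I * (φ₀ : ℂ)) * φ (-a)
        + (b : ℂ) * Db ∧
     Da = (c : ℂ) * φ (-a)
        + ((Real.sqrt (1 + b * c) : ℝ) : ℂ) * Complex.exp (-(Complex.I * (φ₀ : ℂ))) * Db) ↔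
    (ψ a = (((Real.sqrt (1 + b * c) : ℝ) : ℂ) * Complex.exp (Complex.I * (φ₀ : ℂ))
          - (t : ℂ) * (b : ℂ)) * ψ (-a) + (b : ℂ) * ψ' (-a) ∧
     ψ' a = ((c - 2 * t * Real.sqrt (1 + b * c) * Real.cos φ₀ + t ^ 2 * b : ℝ) : ℂ) * ψ (-a)
        + (((Real.sqrt (1 + b * c) : ℝ) : ℂ) * Complex.exp (-(Complex.I * (φ₀ : ℂ)))
          - (t : ℂ) * (b : ℂ)) * ψ' (-a)) := by
  set p : ℝ := -(1 / 2 : ℝ) with hp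
  have hma : a ∈ Set.Icc (-a) a := ⟨by linarith, le_refl a⟩
  have hmna : -a ∈ Set.Icc (-a) a := ⟨le_refl _, by linarith⟩
  have hcos : 0 < Real.cos a :=
    Real.cos_pos_of_mem_Ioo ⟨by linarith [Real.pi_pos], ha⟩
  set r : ℝ := Real.cos a ^ p with hr
  have hrpos : 0 < r := Real.rpow_pos_of_pos hcos p
  have hrc : (r : ℂ) ≠ 0 := by exact_mod_cast hrpos.ne'
  -- derivative of the weight at a
  have hga : HasDerivAt (fun y => Real.cos y ^ p) (t * r) a := by
    have h1 := (Real.hasDerivAt_cos a).rpow_const (p := p) (Or.inl hcos.ne')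
    have : -Real.sin a * p * Real.cos a ^ (p - 1) = t * r := by
      rw [Real.rpow_sub hcos, Real.rpow_one, ht, Real.tan_eq_sin_div_cos, hr, hp]
      ring
    rwa [this] at h1
  have hgna : HasDerivAt (fun y => Real.cos y ^ p) (-(t * r)) (-a) := by
    have h1 := (Real.hasDerivAt_cos (-a)).rpow_const (p := p)
      (Or.inl (by rw [Real.cos_neg]; exact hcos.ne'))
    have : -Real.sin (-a) * p * Real.cos (-a) ^ (p - 1) = -(t * r) := by
      rw [Real.sin_neg, Real.cos_neg, Real.rpow_sub hcos, Real.rpow_one, ht,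
        Real.tan_eq_sin_div_cos, hr, hp]
      ring
    rwa [this] at h1
  have hφa : HasDerivAt φ (((t * r : ℝ) : ℂ) * ψ a + (r : ℂ) * ψ' a) a := by
    rw [hφ]
    exact (hga.ofReal_comp).mul (hd a hma)
  have hφna : HasDerivAt φ (((-(t * r) : ℝ) : ℂ) * ψ (-a) + ((Real.cos (-a) ^ p : ℝ) : ℂ) * ψ' (-a)) (-a) := by
    rw [hφ]
    exact (hgna.ofReal_comp).mul (hd (-a) hmna)
  have hDa' : Da = ((t * r : ℝ) : ℂ) * ψ a + (r : ℂ) * ψ' a := hDa.unique hφa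
  have hDb' : Db = ((-(t * r) : ℝ) : ℂ) * ψ (-a) + (r : ℂ) * ψ' (-a) := by
    have := hDb.unique hφna
    rwa [Real.cos_neg] at this
  have hφa' : φ a = (r : ℂ) * ψ a := by rw [hφ]
  have hφna' : φ (-a) = (r : ℂ) * ψ (-a) := by rw [hφ]; simp [Real.cos_neg, hr]
  -- sum of exponentials
  have hsum : Complex.exp (Complex.I * (φ₀ : ℂ)) + Complex.exp (-(Complex.I * (φ₀ : ℂ)))
      = 2 * Complex.cos (φ₀ : ℂ) := by
    rw [mul_comm Complex.I (φ₀ : ℂ), Complex.exp_mul_I, ← neg_mul, Complex.exp_mul_I,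
      Complex.cos_neg, Complex.sin_neg]
    ring
  rw [hDa', hDb', hφa', hφna']
  push_cast
  set S := Complex.exp (Complex.I * (φ₀ : ℂ)) with hS
  set T := Complex.exp (-(Complex.I * (φ₀ : ℂ))) with hT
  constructor
  · rintro ⟨h1, h2⟩
    have e1 : ψ a = ((Real.sqrt (1 + b * c) : ℂ) * S - (t : ℂ) * (b : ℂ)) * ψ (-a)
        + (b : ℂ) * ψ' (-a) := by
      apply mul_left_cancel₀ hrc
      linear_combination h1
    refine ⟨e1, ?_⟩
    apply mul_left_cancel₀ hrc
    linear_combination h2 - (t : ℂ) * (r : ℂ) * e1 - ((Real.sqrt (1 + b * c) : ℝ) : ℂ) * (t : ℂ) * (r : ℂ) * (ψ (-a)) * hsum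
  · rintro ⟨h1, h2⟩
    constructor
    · linear_combination (r : ℂ) * h1
    · linear_combination (r : ℂ) * h2 + (t : ℂ) * (r : ℂ) * h1 + ((Real.sqrt (1 + b * c) : ℝ) : ℂ) * (t : ℂ) * (r : ℂ) * (ψ (-a)) * hsum
end

section
/- Let a>0, b>0, c≥−1/b, φ₀∈ℝ, and let ψ:[-a,a]→ℂ be continuously differentiable. Define φ(y):=(cosh y)^{−1/2}·ψ(y) for y∈[-a,a], and set t:=(1/2)·tanh(a). Then φ satisfies φ(a)=√(1+bc)·e^{iφ₀}·φ(−a)+b·φ′(−a) and φ′(a)=c·φ(−a)+√(1+bc)·e^{−iφ₀}·φ′(−a) if and only if ψ satisfies ψ(a)=(√(1+bc)·e^{iφ₀}+t·b)·ψ(−a)+b·ψ′(−a) and ψ′(a)=(c+2t·√(1+bc)·cos(φ₀)+t²·b)·ψ(−a)+(√(1+bc)·e^{−iφ₀}+t·b)·ψ′(−a). -/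
/-! The weight `w = (cosh y)^{-1/2}` satisfies `w' = -(tanh y / 2) w`, so the Cauchy data of
`φ = w ψ` at `±a` are `w(a)` times the sheared data `(ψ, ψ' ∓ t ψ)`, with `t = tanh a / 2`.
Conjugating the boundary matrix `B` by these shears gives `B₋`; its lower-left entry picks up
`t (B₁₁ + B₂₂) = 2 t √(1 + bc) cos φ₀`. -/

open Real

lemma hasDerivAt_cosh_rpow_neg_half (y : ℝ) :
    HasDerivAt (fun y => cosh y ^ (-(1 / 2 : ℝ)))
      (-(tanh y / 2) * cosh y ^ (-(1 / 2 : ℝ))) y := by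
  have hcosh := cosh_pos y
  convert (hasDerivAt_cosh y).rpow_const (p := -(1 / 2 : ℝ)) (Or.inl hcosh.ne') using 1
  rw [rpow_sub_one hcosh.ne', tanh_eq_sinh_div_cosh]
  ring

lemma hasDerivAt_cosh_rpow_neg_half_mul {ψ : ℝ → ℂ} {ψ' : ℂ} {y : ℝ}
    (hψ : HasDerivAt ψ ψ' y) :
    HasDerivAt (fun y => ((cosh y ^ (-(1 / 2 : ℝ)) : ℝ) : ℂ) * ψ y)
      (((cosh y ^ (-(1 / 2 : ℝ)) : ℝ) : ℂ) * (ψ' - ((tanh y / 2 : ℝ) : ℂ) * ψ y)) y := by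
  refine ((hasDerivAt_cosh_rpow_neg_half y).ofReal_comp.mul hψ).congr_deriv ?_
  push_cast
  ring

/-- The relation `X₁ = !![p, q; r, s] X₀` imposed on the data `X₁ = k (u₁, v₁ - t u₁)` and
`X₀ = k (u₀, v₀ + t u₀)` is the relation on `(u, v)` given by the shear-conjugated matrix. -/
lemma shear_boundary_conditions_iff {K : Type*} [Field K] {k t p q r s u₀ v₀ u₁ v₁ : K}
    (hk : k ≠ 0) :
    (k * u₁ = p * (k * u₀) + q * (k * (v₀ + t * u₀)) ∧
        k * (v₁ - t * u₁) = r * (k * u₀) + s * (k * (v₀ + t * u₀))) ↔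
      (u₁ = (p + t * q) * u₀ + q * v₀ ∧
        v₁ = (r + t * (p + s) + t ^ 2 * q) * u₀ + (s + t * q) * v₀) := by
  constructor
  · rintro ⟨h₁, h₂⟩
    have g₁ : u₁ = (p + t * q) * u₀ + q * v₀ :=
      mul_left_cancel₀ hk (by linear_combination h₁)
    exact ⟨g₁, mul_left_cancel₀ hk (by linear_combination h₂ + t * k * g₁)⟩
  · rintro ⟨g₁, g₂⟩
    exact ⟨by linear_combination k * g₁, by linear_combination k * g₂ - t * k * g₁⟩

lemma exp_I_mul_add_exp_neg_I_mul (θ : ℝ) :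
    Complex.exp (Complex.I * θ) + Complex.exp (-(Complex.I * θ)) = 2 * (cos θ : ℂ) := by
  rw [Complex.ofReal_cos, Complex.two_cos, mul_comm, neg_mul]

theorem pt_negative_curvature_connected_bc_general
    (a b c φ₀ : ℝ) (ha : 0 < a)
    (ψ ψ' : ℝ → ℂ)
    (hd : ∀ x ∈ Set.Icc (-a) a, HasDerivAt ψ (ψ' x) x)
    (φ : ℝ → ℂ)
    (hφ : φ = fun y : ℝ => ((Real.cosh y ^ (-(1 / 2 : ℝ)) : ℝ) : ℂ) * ψ y)
    (t : ℝ) (ht : t = Real.tanh a / 2)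
    (Da Db : ℂ) (hDa : HasDerivAt φ Da a) (hDb : HasDerivAt φ Db (-a)) :
    (φ a = ((Real.sqrt (1 + b * c) : ℝ) : ℂ) * Complex.exp (Complex.I * (φ₀ : ℂ)) * φ (-a)
        + (b : ℂ) * Db ∧
     Da = (c : ℂ) * φ (-a)
        + ((Real.sqrt (1 + b * c) : ℝ) : ℂ) * Complex.exp (-(Complex.I * (φ₀ : ℂ))) * Db) ↔
    (ψ a = (((Real.sqrt (1 + b * c) : ℝ) : ℂ) * Complex.exp (Complex.I * (φ₀ : ℂ))
          + (t : ℂ) * (b : ℂ)) * ψ (-a) + (b : ℂ) * ψ' (-a) ∧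
     ψ' a = ((c + 2 * t * Real.sqrt (1 + b * c) * Real.cos φ₀ + t ^ 2 * b : ℝ) : ℂ) * ψ (-a)
        + (((Real.sqrt (1 + b * c) : ℝ) : ℂ) * Complex.exp (-(Complex.I * (φ₀ : ℂ)))
          + (t : ℂ) * (b : ℂ)) * ψ' (-a)) := by
  set k : ℂ := ((cosh a ^ (-(1 / 2 : ℝ)) : ℝ) : ℂ)
  have hk : k ≠ 0 := Complex.ofReal_ne_zero.mpr (rpow_pos_of_pos (cosh_pos a) _).ne'
  have hDa' : Da = k * (ψ' a - t * ψ a) := by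
    rw [ht, hDa.unique (hφ ▸ hasDerivAt_cosh_rpow_neg_half_mul (hd a ⟨by linarith, le_rfl⟩))]
  have hDb' : Db = k * (ψ' (-a) + t * ψ (-a)) := by
    rw [ht, hDb.unique (hφ ▸ hasDerivAt_cosh_rpow_neg_half_mul (hd (-a) ⟨le_rfl, by linarith⟩))]
    simp only [cosh_neg, tanh_neg, k]
    push_cast
    ring
  have hφa : φ a = k * ψ a := by rw [hφ]
  have hφb : φ (-a) = k * ψ (-a) := by rw [hφ]; simp only [cosh_neg, k]
  have hcoef : ((c + 2 * t * √(1 + b * c) * cos φ₀ + t ^ 2 * b : ℝ) : ℂ) =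
      c + t * (√(1 + b * c) * Complex.exp (Complex.I * φ₀)
        + √(1 + b * c) * Complex.exp (-(Complex.I * φ₀))) + t ^ 2 * b := by
    rw [← mul_add, exp_I_mul_add_exp_neg_I_mul]
    push_cast
    ring
  rw [hφa, hφb, hDa', hDb', hcoef]
  exact shear_boundary_conditions_iff hk

/-- the unitary map `U₋ψ = (cosh x)^{-1/2} ψ` transforms
connected PT-symmetric boundary conditions on the negatively curved strip into
modified connected boundary conditions with matrix `B₋` (where
`t = (1/2) tanh a`). -/
theorem pt_negative_curvature_connected_bc
    (a b c φ₀ : ℝ) (ha : 0 < a) (hb : 0 < b) (hc : -(1 / b) ≤ c)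
    (ψ ψ' : ℝ → ℂ)
    (hd : ∀ x ∈ Set.Icc (-a) a, HasDerivAt ψ (ψ' x) x)
    (hcont : ContinuousOn ψ' (Set.Icc (-a) a))
    (φ : ℝ → ℂ)
    (hφ : φ = fun y : ℝ => ((Real.cosh y ^ (-(1 / 2 : ℝ)) : ℝ) : ℂ) * ψ y)
    (t : ℝ) (ht : t = Real.tanh a / 2)
    (Da Db : ℂ) (hDa : HasDerivAt φ Da a) (hDb : HasDerivAt φ Db (-a)) :
    (φ a = ((Real.sqrt (1 + b * c) : ℝ) : ℂ) * Complex.exp (Complex.I * (φ₀ : ℂ)) * φ (-a)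
        + (b : ℂ) * Db ∧
     Da = (c : ℂ) * φ (-a)
        + ((Real.sqrt (1 + b * c) : ℝ) : ℂ) * Complex.exp (-(Complex.I * (φ₀ : ℂ))) * Db) ↔
    (ψ a = (((Real.sqrt (1 + b * c) : ℝ) : ℂ) * Complex.exp (Complex.I * (φ₀ : ℂ))
          + (t : ℂ) * (b : ℂ)) * ψ (-a) + (b : ℂ) * ψ' (-a) ∧
     ψ' a = ((c + 2 * t * Real.sqrt (1 + b * c) * Real.cos φ₀ + t ^ 2 * b : ℝ) : ℂ) * ψ (-a)
        + (((Real.sqrt (1 + b * c) : ℝ) : ℂ) * Complex.exp (-(Complex.I * (φ₀ : ℂ)))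
          + (t : ℂ) * (b : ℂ)) * ψ' (-a)) :=
  pt_negative_curvature_connected_bc_general a b c φ₀ ha ψ ψ' hd φ hφ t ht Da Db hDa hDb
end
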